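/- arXiv:1910.08450 — 10 statements merged into one kernel-verified Lean document; each statement's English description precedes it below -/
import Mathlib

section
/- Let Ω : ℝ → ℝ be monotonically increasing on [0,∞), sub-additive on nonnegative arguments (Ω(x+y) ≤ Ω(x) + Ω(y) for all x, y ≥ 0), and sub-homogeneous of degree d ≥ 1 (Ω(μx) ≤ μ^d·Ω(x) for all μ ∈ [0,1] and x ≥ 0). Then for every n ≥ 1 and every x = (x_1,…,x_n) ∈ ℝⁿ with nonnegative entries, Ω(n^{-1}·‖x‖₂) ≤ n^{-d}·Σ_{i=1}^n Ω(x_i), where ‖x‖₂ = (Σ_{i=1}^n x_i²)^{1/2}. -/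
/-- If Ω is monotonically increasing on [0,∞), sub-additive on nonnegative
arguments, and sub-homogeneous of degree d ≥ 1, then for every n ≥ 1 and every
nonnegative x ∈ ℝⁿ, Ω(n⁻¹‖x‖₂) ≤ n^{-d} Σ Ω(xᵢ). -/
theorem stmt0 (Ω : ℝ → ℝ) (d : ℝ) (hd : 1 ≤ d)
    (hmono : MonotoneOn Ω (Set.Ici 0))
    (hsub : ∀ x y : ℝ, 0 ≤ x → 0 ≤ y → Ω (x + y) ≤ Ω x + Ω y)
    (hhom : ∀ μ : ℝ, 0 ≤ μ → μ ≤ 1 → ∀ x : ℝ, 0 ≤ x → Ω (μ * x) ≤ μ ^ d * Ω x) :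
    ∀ n : ℕ, 1 ≤ n → ∀ x : Fin n → ℝ, (∀ i, 0 ≤ x i) →
      Ω ((n : ℝ)⁻¹ * Real.sqrt (∑ i, x i ^ 2)) ≤ (n : ℝ) ^ (-d) * ∑ i, Ω (x i) := by
  -- sub-additivity over nonempty sums
  have key : ∀ {ι : Type} (s : Finset ι), s.Nonempty → ∀ f : ι → ℝ, (∀ i, 0 ≤ f i) →
      Ω (∑ i ∈ s, f i) ≤ ∑ i ∈ s, Ω (f i) := by
    intro ι s hs
    induction hs using Finset.Nonempty.cons_induction with
    | singleton a => simp
    | cons a s ha hs ih =>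
      intro f hf
      rw [Finset.sum_cons, Finset.sum_cons]
      calc Ω (f a + ∑ i ∈ s, f i) ≤ Ω (f a) + Ω (∑ i ∈ s, f i) :=
            hsub _ _ (hf a) (Finset.sum_nonneg fun i _ => hf i)
        _ ≤ Ω (f a) + ∑ i ∈ s, Ω (f i) := by linarith [ih f hf]
  intro n hn x hx
  have hn0 : (0:ℝ) < n := by exact_mod_cast hn
  have hS0 : 0 ≤ ∑ i, x i := Finset.sum_nonneg fun i _ => hx i
  have hsqrt : Real.sqrt (∑ i, x i ^ 2) ≤ ∑ i, x i := by
    rw [show (∑ i, x i) = Real.sqrt ((∑ i, x i) ^ 2) from (Real.sqrt_sq hS0).symm]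
    exact Real.sqrt_le_sqrt (Finset.sum_sq_le_sq_sum_of_nonneg fun i _ => hx i)
  have hμ0 : (0:ℝ) ≤ (n:ℝ)⁻¹ := by positivity
  have hμ1 : (n:ℝ)⁻¹ ≤ 1 := by
    rw [inv_le_one_iff₀]; right; exact_mod_cast hn
  have hne : Nonempty (Fin n) := ⟨⟨0, hn⟩⟩
  calc Ω ((n : ℝ)⁻¹ * Real.sqrt (∑ i, x i ^ 2))
      ≤ Ω ((n : ℝ)⁻¹ * ∑ i, x i) := by
        apply hmono (Set.mem_Ici.2 (by positivity)) (Set.mem_Ici.2 (by positivity))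
        exact mul_le_mul_of_nonneg_left hsqrt hμ0
    _ ≤ ((n:ℝ)⁻¹) ^ d * Ω (∑ i, x i) := hhom _ hμ0 hμ1 _ hS0
    _ ≤ ((n:ℝ)⁻¹) ^ d * ∑ i, Ω (x i) := by
        apply mul_le_mul_of_nonneg_left _ (Real.rpow_nonneg hμ0 d)
        exact key Finset.univ Finset.univ_nonempty x hx
    _ = (n : ℝ) ^ (-d) * ∑ i, Ω (x i) := by
        rw [Real.inv_rpow hn0.le, ← Real.rpow_neg hn0.le]
end

section
/- For every real p with 0 < p ≤ 1, the function z ↦ (1/p)·exp(z^p)·z^{2-p} is convex on [0,∞). -/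
/-!
On `(0, ∞)` the derivative of `z ↦ (1/p) exp(z^p) z^(2-p)` is
`exp(z^p) (z + (2-p)/p · z^(1-p))`. For `0 < p ≤ 1` both factors are nonnegative and
nondecreasing, so the derivative is monotone, and a function continuous on `[0, ∞)` with a
monotone derivative on `(0, ∞)` is convex there.
-/

open Real Set

theorem MonotoneOn.convexOn_of_hasDerivAt {D : Set ℝ} (hD : Convex ℝ D) {f f' : ℝ → ℝ}
    (hf : ContinuousOn f D) (hf' : ∀ x ∈ interior D, HasDerivAt f (f' x) x)
    (hf'_mono : MonotoneOn f' (interior D)) : ConvexOn ℝ D f :=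
  hf'_mono.congr (fun x hx ↦ (hf' x hx).deriv.symm) |>.convexOn_of_deriv hD hf
    fun x hx ↦ (hf' x hx).differentiableAt.differentiableWithinAt

theorem continuousOn_mul_exp_rpow_mul_rpow {p : ℝ} (c : ℝ) (hp0 : 0 ≤ p) (hp2 : p ≤ 2) :
    ContinuousOn (fun z : ℝ ↦ c * exp (z ^ p) * z ^ (2 - p)) (Ici 0) := by
  have h₁ : ContinuousOn (fun z : ℝ ↦ z ^ p) (Ici 0) :=
    continuousOn_id.rpow_const fun _ _ ↦ Or.inr hp0
  have h₂ : ContinuousOn (fun z : ℝ ↦ z ^ (2 - p)) (Ici 0) :=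
    continuousOn_id.rpow_const fun _ _ ↦ Or.inr (by linarith)
  exact (continuousOn_const.mul h₁.rexp).mul h₂

theorem hasDerivAt_div_mul_exp_rpow_mul_rpow {p x : ℝ} (hp : p ≠ 0) (hx : 0 < x) :
    HasDerivAt (fun z : ℝ ↦ 1 / p * exp (z ^ p) * z ^ (2 - p))
      (exp (x ^ p) * (x + (2 - p) / p * x ^ (1 - p))) x := by
  have hexp := (hasDerivAt_rpow_const (p := p) (Or.inl hx.ne')).exp
  have hpow := hasDerivAt_rpow_const (x := x) (p := 2 - p) (Or.inl hx.ne')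
  refine ((hexp.const_mul (1 / p)).mul hpow).congr_deriv ?_
  have hx_eq : x ^ (p - 1) * x ^ (2 - p) = x := by
    rw [← rpow_add hx]
    norm_num
  rw [show 2 - p - 1 = 1 - p by ring]
  field_simp
  linear_combination p * hx_eq

theorem monotoneOn_exp_rpow_mul_add_mul_rpow {p c : ℝ} (hp0 : 0 ≤ p) (hp1 : p ≤ 1)
    (hc : 0 ≤ c) : MonotoneOn (fun x : ℝ ↦ exp (x ^ p) * (x + c * x ^ (1 - p))) (Ici 0) := by
  have hpow : MonotoneOn (fun x : ℝ ↦ x ^ (1 - p)) (Ici 0) :=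
    monotoneOn_rpow_Ici_of_exponent_nonneg (by linarith)
  refine (exp_monotone.comp_monotoneOn (monotoneOn_rpow_Ici_of_exponent_nonneg hp0)).mul
    (monotoneOn_id.add fun a ha b hb hab ↦ mul_le_mul_of_nonneg_left (hpow ha hb hab) hc)
    (fun x _ ↦ (exp_pos _).le) fun x (hx : 0 ≤ x) ↦ ?_
  have := rpow_nonneg hx (1 - p)
  positivity

/-- For 0 < p ≤ 1, the function z ↦ (1/p)·exp(z^p)·z^{2-p} is convex on [0,∞). -/
theorem stmt2 (p : ℝ) (hp0 : 0 < p) (hp1 : p ≤ 1) :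
    ConvexOn ℝ (Set.Ici 0) (fun z : ℝ => 1 / p * Real.exp (z ^ p) * z ^ (2 - p)) := by
  have hc : 0 ≤ (2 - p) / p := div_nonneg (by linarith) hp0.le
  refine MonotoneOn.convexOn_of_hasDerivAt (convex_Ici 0)
    (continuousOn_mul_exp_rpow_mul_rpow _ hp0.le (by linarith))
    (fun x hx ↦ hasDerivAt_div_mul_exp_rpow_mul_rpow hp0.ne' (by simpa using hx)) ?_
  rw [interior_Ici]
  exact (monotoneOn_exp_rpow_mul_add_mul_rpow hp0.le hp1 hc).mono Ioi_subset_Ici_self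
end

section
/- The function z ↦ (π/2)·(exp(2z) − 1)^{1/2}·z is convex on [0,∞). -/
/-! Writing `E = exp (2z)`, the second derivative of `√(E - 1) · z` on `(0, ∞)` is
`E ((z + 2)(E - 1) - z) / √(E - 1)³`, which is nonnegative because `E - 1 ≥ 2z`. -/

open Real Set

lemma exp_two_mul_sub_one_pos {z : ℝ} (hz : 0 < z) : 0 < exp (2 * z) - 1 := by
  linarith [add_one_lt_exp (by positivity : 2 * z ≠ 0)]

lemma le_add_two_mul_exp_two_mul_sub_one {z : ℝ} (hz : 0 ≤ z) :
    z ≤ (z + 2) * (exp (2 * z) - 1) := by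
  nlinarith [add_one_le_exp (2 * z)]

lemma hasDerivAt_exp_two_mul_sub_one (z : ℝ) :
    HasDerivAt (fun z => exp (2 * z) - 1) (2 * exp (2 * z)) z :=
  (((hasDerivAt_id' z).const_mul 2).exp.sub_const 1).congr_deriv (by ring)

lemma hasDerivAt_sqrt_exp_two_mul_sub_one {z : ℝ} (hz : 0 < z) :
    HasDerivAt (fun z => √(exp (2 * z) - 1)) (exp (2 * z) / √(exp (2 * z) - 1)) z :=
  ((hasDerivAt_exp_two_mul_sub_one z).sqrt (exp_two_mul_sub_one_pos hz).ne').congr_deriv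
    (mul_div_mul_left _ _ two_ne_zero)

lemma hasDerivAt_sqrt_exp_two_mul_sub_one_mul_self {z : ℝ} (hz : 0 < z) :
    HasDerivAt (fun z => √(exp (2 * z) - 1) * z)
      (((z + 1) * exp (2 * z) - 1) / √(exp (2 * z) - 1)) z := by
  have hu := exp_two_mul_sub_one_pos hz
  refine ((hasDerivAt_sqrt_exp_two_mul_sub_one hz).mul (hasDerivAt_id' z)).congr_deriv ?_
  field_simp
  linear_combination sq_sqrt hu.le

lemma hasDerivAt_deriv_sqrt_exp_two_mul_sub_one_mul_self {z : ℝ} (hz : 0 < z) :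
    HasDerivAt (fun z => ((z + 1) * exp (2 * z) - 1) / √(exp (2 * z) - 1))
      (exp (2 * z) * ((z + 2) * (exp (2 * z) - 1) - z) / √(exp (2 * z) - 1) ^ 3) z := by
  have hu := exp_two_mul_sub_one_pos hz
  have hnum : HasDerivAt (fun z => (z + 1) * exp (2 * z) - 1)
      ((2 * z + 3) * exp (2 * z)) z := by
    refine ((((hasDerivAt_id' z).add_const 1).mul
      ((hasDerivAt_id' z).const_mul 2).exp).sub_const 1).congr_deriv ?_
    ring
  refine (hnum.div (hasDerivAt_sqrt_exp_two_mul_sub_one hz)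
    (sqrt_pos.mpr hu).ne').congr_deriv ?_
  field_simp
  linear_combination (2 * z + 3) * sq_sqrt hu.le

theorem convexOn_sqrt_exp_two_mul_sub_one_mul_self :
    ConvexOn ℝ (Ici 0) (fun z : ℝ => √(exp (2 * z) - 1) * z) := by
  refine convexOn_of_hasDerivWithinAt2_nonneg (convex_Ici 0) (by fun_prop)
    (fun z hz => (hasDerivAt_sqrt_exp_two_mul_sub_one_mul_self
      (interior_Ici.subset hz)).hasDerivWithinAt)
    (fun z hz => (hasDerivAt_deriv_sqrt_exp_two_mul_sub_one_mul_self
      (interior_Ici.subset hz)).hasDerivWithinAt)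
    (fun z hz => ?_)
  have hz : 0 < z := interior_Ici.subset hz
  have hnum := sub_nonneg.mpr (le_add_two_mul_exp_two_mul_sub_one hz.le)
  positivity

/-- The function z ↦ (π/2)·(exp(2z) − 1)^{1/2}·z is convex on [0,∞). -/
theorem stmt3 :
    ConvexOn ℝ (Set.Ici 0)
      (fun z : ℝ => Real.pi / 2 * Real.sqrt (Real.exp (2 * z) - 1) * z) := by
  simpa only [smul_eq_mul, mul_assoc] using
    convexOn_sqrt_exp_two_mul_sub_one_mul_self.smul (by positivity : 0 ≤ π / 2)
end

section
/- Let a, b, p, q, k be positive reals with k·p < 1 and k·q > 1, and set m_p = (1 − kp)/(q − p) and m_q = (kq − 1)/(q − p). Then ∫₀^{∞} (a·z^p + b·z^q)^{−k} dz = (Γ(m_p)·Γ(m_q))/(a^k·Γ(k)·(q − p)) · (a/b)^{m_p}, where Γ is the real Gamma function Γ(z) = ∫₀^{∞} e^{−t} t^{z−1} dt. -/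
/-! Factoring out `z ^ p` and substituting `y = z ^ (q - p)` turns the integrand into
`y ^ (m_p - 1) * (a + b * y) ^ (-k)` up to the factor `(q - p)⁻¹`; after rescaling `y = (a / b) u`
this is the Beta integral `∫₀^∞ u ^ (s - 1) (1 + u) ^ (-(s + t)) du = B(s, t)` with `s = m_p`,
`t = m_q`, `s + t = k`, which `x = u / (1 + u)` carries to the usual Beta integral on `(0, 1)`. -/

open MeasureTheory Real Set

theorem integral_Ioo_rpow_mul_one_sub_rpow {s t : ℝ} (hs : 0 < s) (ht : 0 < t) :
    ∫ x in Ioo (0:ℝ) 1, x ^ (s - 1) * (1 - x) ^ (t - 1) = ProbabilityTheory.beta s t := by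
  have hcast : Complex.betaIntegral s t = ↑(∫ x in (0:ℝ)..1, x ^ (s - 1) * (1 - x) ^ (t - 1)) := by
    rw [Complex.betaIntegral, ← intervalIntegral.integral_ofReal]
    refine intervalIntegral.integral_congr fun x hx => ?_
    rw [uIcc_of_le zero_le_one] at hx
    push_cast
    rw [Complex.ofReal_cpow hx.1, Complex.ofReal_cpow (sub_nonneg.2 hx.2)]
    push_cast
    rfl
  rw [ProbabilityTheory.beta_eq_betaIntegralReal s t hs ht, hcast, Complex.ofReal_re,
    intervalIntegral.integral_of_le zero_le_one, integral_Ioc_eq_integral_Ioo]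

theorem image_div_one_sub_Ioo : (fun x : ℝ => x / (1 - x)) '' Ioo 0 1 = Ioi 0 := by
  refine Subset.antisymm ?_ fun u (hu : 0 < u) => ⟨u / (1 + u), ⟨by positivity, ?_⟩, ?_⟩
  · rintro _ ⟨x, ⟨hx0, hx1⟩, rfl⟩
    exact div_pos hx0 (sub_pos.2 hx1)
  · rw [div_lt_one (by positivity)]; linarith
  · field_simp; ring

theorem strictMonoOn_div_one_sub : StrictMonoOn (fun x : ℝ => x / (1 - x)) (Ioo 0 1) := by
  intro x hx y hy hxy
  dsimp only
  rw [div_lt_div_iff₀ (sub_pos.2 hx.2) (sub_pos.2 hy.2)]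
  nlinarith

theorem hasDerivAt_div_one_sub {x : ℝ} (hx : x ≠ 1) :
    HasDerivAt (fun x : ℝ => x / (1 - x)) ((1 - x) ^ 2)⁻¹ x := by
  refine ((hasDerivAt_id' x).div ((hasDerivAt_id' x).const_sub 1)
    (sub_ne_zero.2 hx.symm)).congr_deriv ?_
  field_simp
  ring

theorem integral_Ioi_rpow_mul_one_add_rpow_neg {s t : ℝ} (hs : 0 < s) (ht : 0 < t) :
    ∫ u in Ioi (0:ℝ), u ^ (s - 1) * (1 + u) ^ (-(s + t)) = ProbabilityTheory.beta s t := by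
  rw [← integral_Ioo_rpow_mul_one_sub_rpow hs ht, ← image_div_one_sub_Ioo,
    integral_image_eq_integral_abs_deriv_smul measurableSet_Ioo
      (fun x hx => (hasDerivAt_div_one_sub hx.2.ne).hasDerivWithinAt)
      strictMonoOn_div_one_sub.injOn]
  refine setIntegral_congr_fun measurableSet_Ioo fun x ⟨hx0, hx1⟩ => ?_
  set y := 1 - x
  have hy : 0 < y := sub_pos.2 hx1
  have hy_add : 1 + x / y = y⁻¹ := by field_simp; ring
  have hy_pow : y ^ (s + t) = y ^ (t - 1) * y ^ (s - 1) * y ^ 2 := by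
    rw [← rpow_natCast, ← rpow_add hy, ← rpow_add hy]
    push_cast
    ring_nf
  rw [smul_eq_mul, hy_add, abs_of_pos (by positivity), div_rpow hx0.le hy.le, inv_rpow hy.le,
    rpow_neg hy.le, inv_inv, hy_pow]
  field_simp

theorem integral_Ioi_rpow_mul_add_mul_rpow_neg {a b s t : ℝ} (ha : 0 < a) (hb : 0 < b)
    (hs : 0 < s) (ht : 0 < t) :
    ∫ y in Ioi (0:ℝ), y ^ (s - 1) * (a + b * y) ^ (-(s + t)) =
      ProbabilityTheory.beta s t / (a ^ t * b ^ s) := by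
  have hc : 0 < a / b := div_pos ha hb
  have hscale :=
    integral_comp_mul_left_Ioi' (fun y => y ^ (s - 1) * (a + b * y) ^ (-(s + t))) 0 hc
  rw [mul_zero] at hscale
  rw [← hscale, smul_eq_mul]
  have hpt : ∀ u ∈ Ioi (0:ℝ), (a / b * u) ^ (s - 1) * (a + b * (a / b * u)) ^ (-(s + t)) =
      (a / b) ^ (s - 1) * a ^ (-(s + t)) * (u ^ (s - 1) * (1 + u) ^ (-(s + t))) := by
    intro u (hu : 0 < u)
    rw [show a + b * (a / b * u) = a * (1 + u) by field_simp, mul_rpow hc.le hu.le,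
      mul_rpow ha.le (by positivity)]
    ring
  rw [setIntegral_congr_fun measurableSet_Ioi hpt, integral_const_mul,
    integral_Ioi_rpow_mul_one_add_rpow_neg hs ht, div_rpow ha.le hb.le, rpow_sub_one ha.ne',
    rpow_sub_one hb.ne', rpow_neg ha.le, rpow_add ha]
  field_simp

theorem integral_Ioi_mul_rpow_add_mul_rpow_rpow_neg {a b p q k : ℝ} (ha : 0 ≤ a) (hb : 0 ≤ b)
    (hpq : p < q) :
    ∫ z in Ioi (0:ℝ), (a * z ^ p + b * z ^ q) ^ (-k) =
      (q - p)⁻¹ * ∫ y in Ioi (0:ℝ), y ^ ((1 - k * p) / (q - p) - 1) * (a + b * y) ^ (-k) := by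
  have hd : 0 < q - p := sub_pos.2 hpq
  conv_rhs => rw [← integral_comp_rpow_Ioi_of_pos hd, ← integral_const_mul]
  refine setIntegral_congr_fun measurableSet_Ioi fun z (hz : 0 < z) => ?_
  have hsplit : a * z ^ p + b * z ^ q = z ^ p * (a + b * z ^ (q - p)) := by
    rw [rpow_sub hz]; field_simp
  rw [hsplit, mul_rpow (by positivity) (by positivity), ← rpow_mul hz.le, ← rpow_mul hz.le,
    smul_eq_mul]
  field_simp
  rw [mul_comm, mul_assoc, ← rpow_add hz]
  ring_nf

theorem stmt6_general (a b p q k : ℝ) (ha : 0 < a) (hb : 0 < b)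
    (hk : 0 < k) (hkp : k * p < 1) (hkq : 1 < k * q) :
    (∫ z in Set.Ioi (0:ℝ), (a * z ^ p + b * z ^ q) ^ (-k)) =
      Real.Gamma ((1 - k * p) / (q - p)) * Real.Gamma ((k * q - 1) / (q - p)) /
        (a ^ k * Real.Gamma k * (q - p)) * (a / b) ^ ((1 - k * p) / (q - p)) := by
  have hpq : p < q := lt_of_mul_lt_mul_left (hkp.trans hkq) hk.le
  have hd : 0 < q - p := sub_pos.2 hpq
  have hmp : 0 < (1 - k * p) / (q - p) := div_pos (sub_pos.2 hkp) hd
  have hmq : 0 < (k * q - 1) / (q - p) := div_pos (sub_pos.2 hkq) hd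
  have hk_eq : (1 - k * p) / (q - p) + (k * q - 1) / (q - p) = k := by field_simp; ring
  have hbeta := integral_Ioi_rpow_mul_add_mul_rpow_neg ha hb hmp hmq
  rw [hk_eq] at hbeta
  have hak : a ^ k = a ^ ((1 - k * p) / (q - p)) * a ^ ((k * q - 1) / (q - p)) := by
    rw [← rpow_add ha, hk_eq]
  rw [integral_Ioi_mul_rpow_add_mul_rpow_rpow_neg ha.le hb.le hpq, hbeta, ProbabilityTheory.beta,
    hk_eq, hak, div_rpow ha.le hb.le]
  field_simp

/-- For a, b, p, q, k > 0 with kp < 1 < kq, with m_p = (1−kp)/(q−p) and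
m_q = (kq−1)/(q−p), ∫₀^∞ (a z^p + b z^q)^{−k} dz = Γ(m_p)Γ(m_q)/(a^k Γ(k)(q−p))·(a/b)^{m_p}. -/
theorem stmt6 (a b p q k : ℝ) (ha : 0 < a) (hb : 0 < b) (hp : 0 < p) (hq : 0 < q)
    (hk : 0 < k) (hkp : k * p < 1) (hkq : 1 < k * q) :
    (∫ z in Set.Ioi (0:ℝ), (a * z ^ p + b * z ^ q) ^ (-k)) =
      Real.Gamma ((1 - k * p) / (q - p)) * Real.Gamma ((k * q - 1) / (q - p)) /
        (a ^ k * Real.Gamma k * (q - p)) * (a / b) ^ ((1 - k * p) / (q - p)) :=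
  stmt6_general a b p q k ha hb hk hkp hkq
end

section
/- Let a, b > 0, 0 < p < 1 < q, and n ≥ 1. For every x = (x_1,…,x_n) ∈ ℝⁿ with nonnegative entries, Σ_{i=1}^n ( a·x_i^{1+p} + b·n^{(q−1)/2}·x_i^{1+q} ) ≥ a·‖x‖₂^{1+p} + b·‖x‖₂^{1+q}, where ‖x‖₂ = (Σ_{i=1}^n x_i²)^{1/2}. Consequently, Ω(z) = γ(a z^{p+1} + b n^{(q−1)/2} z^{q+1}) satisfies the defining inequality Ω̂(β(n)‖x‖₂) ≤ β(n)^d Σ_{i=1}^n Ω(x_i) of a predefined-time consensus function with β(n) = 1, d = 1 and Ω̂(z) = γ(a z^{p+1} + b z^{q+1}), for any γ > 0. -/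
/-- Subadditivity of `t ↦ t ^ r` for `0 < r ≤ 1` over finite sums of nonneg reals. -/
lemma sum_rpow_aux {n : ℕ} {r : ℝ} (hr0 : 0 < r) (hr1 : r ≤ 1) (f : Fin n → ℝ)
    (hf : ∀ i, 0 ≤ f i) : (∑ i, f i) ^ r ≤ ∑ i, f i ^ r := by
  set S := ∑ i, f i with hS
  have hS0 : 0 ≤ S := Finset.sum_nonneg fun i _ => hf i
  rcases eq_or_lt_of_le hS0 with h0 | hpos
  · rw [← h0, Real.zero_rpow hr0.ne']
    exact Finset.sum_nonneg fun i _ => Real.rpow_nonneg (hf i) r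
  · have key : ∀ i : Fin n, S ^ r * (f i / S) ≤ f i ^ r := by
      intro i
      have h1 : f i / S ≤ 1 := (div_le_one hpos).mpr (Finset.single_le_sum (fun j _ => hf j)
        (Finset.mem_univ i))
      have h2 : 0 ≤ f i / S := div_nonneg (hf i) hS0
      have h3 : f i / S ≤ (f i / S) ^ r := by
        rcases eq_or_lt_of_le h2 with h0' | hpos'
        · rw [← h0', Real.zero_rpow hr0.ne']
        · calc f i / S = (f i / S) ^ (1 : ℝ) := (Real.rpow_one _).symm
            _ ≤ (f i / S) ^ r := Real.rpow_le_rpow_of_exponent_ge hpos' h1 hr1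
      calc S ^ r * (f i / S) ≤ S ^ r * (f i / S) ^ r :=
            mul_le_mul_of_nonneg_left h3 (Real.rpow_nonneg hS0 r)
        _ = (S * (f i / S)) ^ r := (Real.mul_rpow hS0 h2).symm
        _ = f i ^ r := by rw [mul_div_cancel₀ _ hpos.ne']
    calc S ^ r = S ^ r * (S / S) := by rw [div_self hpos.ne', mul_one]
      _ = ∑ i, S ^ r * (f i / S) := by
          rw [← Finset.mul_sum, ← Finset.sum_div]
      _ ≤ ∑ i, f i ^ r := Finset.sum_le_sum fun i _ => key i

/-- For a, b > 0, 0 < p < 1 < q, n ≥ 1 and nonnegative x ∈ ℝⁿ,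
Σᵢ (a·xᵢ^{1+p} + b·n^{(q−1)/2}·xᵢ^{1+q}) ≥ a·‖x‖₂^{1+p} + b·‖x‖₂^{1+q}; consequently
Ω(z) = γ(a z^{p+1} + b n^{(q−1)/2} z^{q+1}) satisfies Ω̂(β(n)‖x‖₂) ≤ β(n)^d Σ Ω(xᵢ)
with β(n) = 1, d = 1 and Ω̂(z) = γ(a z^{p+1} + b z^{q+1}), for any γ > 0. -/
theorem stmt9 (a b p q : ℝ) (ha : 0 < a) (hb : 0 < b) (hp0 : 0 < p) (hp1 : p < 1)
    (hq : 1 < q) :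
    ∀ n : ℕ, 1 ≤ n → ∀ x : Fin n → ℝ, (∀ i, 0 ≤ x i) →
      (a * Real.sqrt (∑ i, x i ^ 2) ^ (1 + p) + b * Real.sqrt (∑ i, x i ^ 2) ^ (1 + q) ≤
        ∑ i, (a * x i ^ (1 + p) + b * (n : ℝ) ^ ((q - 1) / 2) * x i ^ (1 + q))) ∧
      (∀ γ : ℝ, 0 < γ →
        γ * (a * Real.sqrt (∑ i, x i ^ 2) ^ (p + 1) +
            b * Real.sqrt (∑ i, x i ^ 2) ^ (q + 1)) ≤
          ∑ i, γ * (a * x i ^ (p + 1) + b * (n : ℝ) ^ ((q - 1) / 2) * x i ^ (q + 1))) := by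
  intro n hn x hx
  set S : ℝ := ∑ i, x i ^ 2 with hSdef
  have hS0 : 0 ≤ S := Finset.sum_nonneg fun i _ => sq_nonneg _
  have hsqrt : ∀ r : ℝ, Real.sqrt S ^ r = S ^ (r / 2) := by
    intro r
    rw [Real.sqrt_eq_rpow, ← Real.rpow_mul hS0]
    ring_nf
  have hxpow : ∀ (i : Fin n) (r : ℝ), (x i ^ 2) ^ (r / 2) = x i ^ r := by
    intro i r
    rw [← Real.rpow_natCast (x i) 2, ← Real.rpow_mul (hx i)]
    congr 1
    push_cast
    ring
  -- p-part
  have hP : S ^ ((1 + p) / 2) ≤ ∑ i, x i ^ (1 + p) := by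
    have := sum_rpow_aux (r := (1 + p) / 2) (by linarith) (by linarith)
      (fun i => x i ^ 2) (fun i => sq_nonneg _)
    simp only [hxpow] at this
    exact this
  -- q-part
  have hQ : S ^ ((1 + q) / 2) ≤ (n : ℝ) ^ ((q - 1) / 2) * ∑ i, x i ^ (1 + q) := by
    have h := Real.rpow_sum_le_const_mul_sum_rpow_of_nonneg (p := (1 + q) / 2)
      (s := Finset.univ) (f := fun i => x i ^ 2) (by linarith) (fun i _ => sq_nonneg _)
    simp only [hxpow, Finset.card_univ, Fintype.card_fin] at h
    have heq : (1 + q) / 2 - 1 = (q - 1) / 2 := by ring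
    rwa [heq] at h
  have main : a * Real.sqrt S ^ (1 + p) + b * Real.sqrt S ^ (1 + q) ≤
      ∑ i, (a * x i ^ (1 + p) + b * (n : ℝ) ^ ((q - 1) / 2) * x i ^ (1 + q)) := by
    rw [hsqrt, hsqrt, Finset.sum_add_distrib, ← Finset.mul_sum]
    have h2 : ∑ i, b * (n : ℝ) ^ ((q - 1) / 2) * x i ^ (1 + q)
        = b * ((n : ℝ) ^ ((q - 1) / 2) * ∑ i, x i ^ (1 + q)) := by
      rw [Finset.mul_sum, Finset.mul_sum]
      exact Finset.sum_congr rfl fun i _ => by ring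
    rw [h2]
    have := mul_le_mul_of_nonneg_left hP ha.le
    have := mul_le_mul_of_nonneg_left hQ hb.le
    linarith
  refine ⟨main, ?_⟩
  intro γ hγ
  have hc1 : p + 1 = 1 + p := by ring
  have hc2 : q + 1 = 1 + q := by ring
  rw [hc1, hc2]
  calc γ * (a * Real.sqrt S ^ (1 + p) + b * Real.sqrt S ^ (1 + q))
      ≤ γ * ∑ i, (a * x i ^ (1 + p) + b * (n : ℝ) ^ ((q - 1) / 2) * x i ^ (1 + q)) :=
        mul_le_mul_of_nonneg_left main hγ.le
    _ = ∑ i, γ * (a * x i ^ (1 + p) + b * (n : ℝ) ^ ((q - 1) / 2) * x i ^ (1 + q)) := by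
        rw [Finset.mul_sum]
end

section
/- Let Φ : (0,∞) → (0,∞) be continuous with ∫₀^{∞} Φ(z) dz ≤ 1, let T_c > 0, and define Ψ(z) = 1/Φ(z) for z > 0. Suppose y : ℝ → ℝ is differentiable on [t₀, t₁], y(t) > 0 for all t ∈ [t₀, t₁), and y′(t) ≤ −(1/T_c)·Ψ(y(t)) for all t ∈ [t₀, t₁). Then t₁ − t₀ ≤ T_c. -/
open MeasureTheory

/-- If Φ : (0,∞) → (0,∞) is continuous with ∫₀^∞ Φ(z) dz ≤ 1, T_c > 0,
Ψ = 1/Φ, and y is differentiable on [t₀,t₁] with y > 0 on [t₀,t₁) and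
y′ ≤ −(1/T_c)Ψ(y) on [t₀,t₁), then t₁ − t₀ ≤ T_c. -/
theorem stmt11 (Φ : ℝ → ℝ) (hΦpos : ∀ z : ℝ, 0 < z → 0 < Φ z)
    (hΦcont : ContinuousOn Φ (Set.Ioi 0))
    (hΦint : IntegrableOn Φ (Set.Ioi 0))
    (hΦle : (∫ z in Set.Ioi (0:ℝ), Φ z) ≤ 1)
    (Tc : ℝ) (hTc : 0 < Tc) (t₀ t₁ : ℝ) (y y' : ℝ → ℝ)
    (hy : ∀ t ∈ Set.Icc t₀ t₁, HasDerivAt y (y' t) t)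
    (hypos : ∀ t ∈ Set.Ico t₀ t₁, 0 < y t)
    (hyd : ∀ t ∈ Set.Ico t₀ t₁, y' t ≤ -(1 / Tc) * (1 / Φ (y t))) :
    t₁ - t₀ ≤ Tc := by
  set F : ℝ → ℝ := fun x => ∫ z in (0:ℝ)..x, Φ z with hFdef
  -- F has derivative Φ x at each x > 0
  have hFderiv : ∀ x : ℝ, 0 < x → HasDerivAt F (Φ x) x := by
    intro x hx
    have hii : IntervalIntegrable Φ volume 0 x := by
      rw [intervalIntegrable_iff_integrableOn_Ioc_of_le hx.le]
      exact hΦint.mono_set Set.Ioc_subset_Ioi_self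
    have hmeas := hΦcont.stronglyMeasurableAtFilter (μ := volume) isOpen_Ioi x hx
    have hcont : ContinuousAt Φ x := hΦcont.continuousAt (Ioi_mem_nhds hx)
    exact intervalIntegral.integral_hasDerivAt_right hii hmeas hcont
  -- F is nonneg and bounded by 1 at positive points
  have hFnonneg : ∀ x : ℝ, 0 < x → 0 ≤ F x := by
    intro x hx
    rw [hFdef]
    simp only
    rw [intervalIntegral.integral_of_le hx.le]
    exact setIntegral_nonneg measurableSet_Ioc
      (fun z hz => (hΦpos z hz.1).le)
  have hFle : ∀ x : ℝ, 0 < x → F x ≤ 1 := by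
    intro x hx
    have : F x ≤ ∫ z in Set.Ioi (0:ℝ), Φ z := by
      rw [hFdef]
      simp only
      rw [intervalIntegral.integral_of_le hx.le]
      apply setIntegral_mono_set hΦint
      · filter_upwards [self_mem_ae_restrict measurableSet_Ioi] with z hz
        exact (hΦpos z hz).le
      · exact Filter.Eventually.of_forall Set.Ioc_subset_Ioi_self
    linarith
  -- main step: for t ∈ [t₀, t₁), t - t₀ ≤ Tc
  have key : ∀ t ∈ Set.Ico t₀ t₁, t - t₀ ≤ Tc := by
    intro t ht
    have hsub : Set.Icc t₀ t ⊆ Set.Ico t₀ t₁ := fun s hs => ⟨hs.1, lt_of_le_of_lt hs.2 ht.2⟩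
    -- g s = F (y s) + s / Tc is antitone on [t₀, t]
    set g : ℝ → ℝ := fun s => F (y s) + s / Tc with hgdef
    have hgderiv : ∀ s ∈ Set.Icc t₀ t, HasDerivAt g (Φ (y s) * y' s + 1 / Tc) s := by
      intro s hs
      have h1 := (hFderiv (y s) (hypos s (hsub hs))).comp s
        (hy s ⟨hs.1, le_trans hs.2 ht.2.le⟩)
      exact h1.add ((hasDerivAt_id s).div_const Tc)
    have hganti : AntitoneOn g (Set.Icc t₀ t) := by
      apply antitoneOn_of_hasDerivWithinAt_nonpos (convex_Icc t₀ t)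
        (fun s hs => (hgderiv s hs).continuousAt.continuousWithinAt)
        (fun s hs => (hgderiv s (interior_subset hs)).hasDerivWithinAt)
      intro s hs
      have hs' := interior_subset hs
      have hΦy := hΦpos (y s) (hypos s (hsub hs'))
      have := hyd s (hsub hs')
      have h2 : Φ (y s) * y' s ≤ Φ (y s) * (-(1 / Tc) * (1 / Φ (y s))) :=
        mul_le_mul_of_nonneg_left this hΦy.le
      have h3 : Φ (y s) * (-(1 / Tc) * (1 / Φ (y s))) = -(1 / Tc) := by
        field_simp
      linarith
    have h4 : g t ≤ g t₀ := hganti ⟨le_refl t₀, ht.1⟩ ⟨ht.1, le_refl t⟩ ht.1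
    have h5 : 0 ≤ F (y t) := hFnonneg _ (hypos t ht)
    have h6 : F (y t₀) ≤ 1 := hFle _ (hypos t₀ ⟨le_refl _, lt_of_le_of_lt ht.1 ht.2⟩)
    simp only [hgdef] at h4
    have h7 : (t - t₀) / Tc ≤ 1 := by rw [sub_div]; linarith
    linarith [(div_le_one hTc).mp h7]
  -- conclude by taking t → t₁
  by_contra hcon
  push_neg at hcon
  have ht01 : t₀ < t₁ := by linarith
  obtain ⟨t, ht, ht'⟩ : ∃ t, t ∈ Set.Ico t₀ t₁ ∧ Tc < t - t₀ := by
    refine ⟨max t₀ ((t₀ + Tc + t₁) / 2), ⟨le_max_left _ _, ?_⟩, ?_⟩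
    · apply max_lt ht01; linarith
    · have h1 : (t₀ + Tc + t₁) / 2 - t₀ > Tc := by linarith
      have := le_max_right t₀ ((t₀ + Tc + t₁) / 2)
      linarith
  exact absurd (key t ht) (not_le.mpr ht')
end

section
/- Let n ≥ 1 and let {D_l}_{l∈ι} be a finite nonempty family of real n×m_l matrices with every column of every D_l summing to zero. Let λ > 0 satisfy: for every l ∈ ι and every δ ∈ ℝⁿ with Σ_i δ_i = 0, δᵀ(D_l D_lᵀ)δ ≥ λ·‖δ‖₂². Set m̲ = min_l m_l and m̄ = max_l m_l. Let Ω be a predefined-time consensus function with data (Ω̂, β, d). For each l, let κ^{(l)}_e (one gain per column e of D_l) satisfy κ^{(l)}_e ≥ κ for some κ > 0, and define F_l : ℝ^{m_l} → ℝ^{m_l} by F_l(v)_e = κ^{(l)}_e·Ω(|v_e|)/v_e if v_e ≠ 0 and F_l(v)_e = 0 if v_e = 0. Let σ : [t₀,∞) → ι be arbitrary and let x : [t₀,∞) → ℝⁿ be differentiable with ẋ(t) = −D_{σ(t)}·F_{σ(t)}(D_{σ(t)}ᵀ x(t)) for all t ≥ t₀. Then for all t ≥ t₀ + β(m̲)^d/(κ·λ·β(m̄)²)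 and all i, x_i(t) = (1/n)·Σ_{j=1}^n x_j(t₀); i.e. average consensus is reached in a fixed time bounded by β(m̲)^d/(κ·λ·β(m̄)²), independently of x(t₀). -/
open Matrix MeasureTheory

/-- A predefined-time consensus function Ω with data (Ω̂, β, d): Ω is monotonically
increasing and nonnegative on [0,∞); Ω̂ is monotonically increasing on [0,∞), positive on
(0,∞) and Ω̂(z)/z is continuous on (0,∞); β is nonincreasing and positive; d ≥ 1;
Ω̂(β(n)‖x‖₂) ≤ β(n)^d Σᵢ Ω(xᵢ) for all n ≥ 1 and nonnegative x ∈ ℝⁿ; and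
∫₀^∞ z/Ω̂(z) dz = 1. -/
def IsPredefinedTimeConsensusFunction (Ω Ωhat : ℝ → ℝ) (β : ℕ → ℝ) (d : ℝ) : Prop :=
  Monotone Ω ∧ (∀ z : ℝ, 0 ≤ z → 0 ≤ Ω z) ∧
  MonotoneOn Ωhat (Set.Ici 0) ∧ (∀ z : ℝ, 0 < z → 0 < Ωhat z) ∧
  ContinuousOn (fun z => Ωhat z / z) (Set.Ioi 0) ∧
  Antitone β ∧ (∀ n : ℕ, 0 < β n) ∧ 1 ≤ d ∧
  (∀ n : ℕ, 1 ≤ n → ∀ x : Fin n → ℝ, (∀ i, 0 ≤ x i) →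
    Ωhat (β n * Real.sqrt (∑ i, x i ^ 2)) ≤ β n ^ d * ∑ i, Ω (x i)) ∧
  (∫ z in Set.Ioi (0:ℝ), z / Ωhat z) = 1

/-!
Let `c` be the initial average and `V = ∑ᵢ (xᵢ - c)²`. Zero column sums keep `∑ᵢ xᵢ` constant,
so `x - c𝟏` stays orthogonal to `𝟏`, and `V' = -2 ⟪Dᵀx, F(Dᵀx)⟫ = -2 ∑ κₑ Ω(|(Dᵀx)ₑ|)`, the sum
running over the edges with `(Dᵀx)ₑ ≠ 0`. If `Ω(0) = 0` the sum may run over all edges; the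
Rayleigh bound `λV ≤ ‖Dᵀx‖²`, the defining inequality of `Ω` and the monotonicity of `β` then give
`W' ≤ -2c Ω̂(√W)` for `W = β(m̄)²λV` and `c = κλβ(m̄)²/β(m̲)^d`. Hence `G(√W(t)) + ct` is
nonincreasing for `G(y) = ∫₀^y z/Ω̂(z) dz`, and `0 < G < 1` forces `W` to vanish by time `1/c`.
If `Ω(0) > 0`, then `V' ≤ -2κΩ(0)` wherever `V > 0` and `V' = 0` wherever `V = 0`; by Darboux's
theorem `V'` cannot pass between these values, so `V` vanishes from the start.
-/

section Incidence

lemma sum_mulVec_eq_zero_of_sum_col_eq_zero {n M : Type*} [Fintype n] [Fintype M]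
    {D : Matrix n M ℝ} (hD : ∀ j, ∑ i, D i j = 0) (q : M → ℝ) : ∑ i, (D *ᵥ q) i = 0 := by
  simp only [mulVec, dotProduct]
  rw [Finset.sum_comm]
  simp [← Finset.sum_mul, hD]

lemma transpose_mulVec_sub_const_of_sum_col_eq_zero {n M : Type*} [Fintype n]
    {D : Matrix n M ℝ} (hD : ∀ j, ∑ i, D i j = 0) (y : n → ℝ) (c : ℝ) :
    Dᵀ *ᵥ (fun i => y i - c) = Dᵀ *ᵥ y := by
  ext j
  simp only [mulVec, dotProduct, transpose_apply, mul_sub, Finset.sum_sub_distrib,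
    ← Finset.sum_mul, hD, zero_mul, sub_zero]

lemma sub_const_dotProduct_mulVec_of_sum_col_eq_zero {n M : Type*} [Fintype n] [Fintype M]
    {D : Matrix n M ℝ} (hD : ∀ j, ∑ i, D i j = 0) (y : n → ℝ) (c : ℝ) (q : M → ℝ) :
    (fun i => y i - c) ⬝ᵥ (D *ᵥ q) = (Dᵀ *ᵥ y) ⬝ᵥ q := by
  rw [dotProduct_mulVec, ← mulVec_transpose, transpose_mulVec_sub_const_of_sum_col_eq_zero hD]

lemma dotProduct_mul_transpose_mulVec {n M : Type*} [Fintype n] [Fintype M]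
    (D : Matrix n M ℝ) (δ : n → ℝ) : δ ⬝ᵥ ((D * Dᵀ) *ᵥ δ) = (Dᵀ *ᵥ δ) ⬝ᵥ (Dᵀ *ᵥ δ) := by
  rw [← mulVec_mulVec, dotProduct_mulVec, ← mulVec_transpose]

end Incidence

section Deviation

variable {ι : Type*} [Fintype ι]

lemma sum_sub_average_eq_zero_of_sum_eq {n : ℕ} {y z : Fin n → ℝ} (h : ∑ i, y i = ∑ i, z i) :
    ∑ i, (y i - (1 / (n : ℝ)) * ∑ j, z j) = 0 := by
  rcases n.eq_zero_or_pos with rfl | hn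
  · simp
  · rw [Finset.sum_sub_distrib, Finset.sum_const, Finset.card_univ, Fintype.card_fin,
      nsmul_eq_mul, h]
    field_simp
    ring

lemma eq_of_sum_sub_sq_eq_zero {y : ι → ℝ} {c : ℝ} (h : ∑ i, (y i - c) ^ 2 = 0) (i : ι) :
    y i = c := by
  have := (Finset.sum_eq_zero_iff_of_nonneg fun i _ => sq_nonneg (y i - c)).1 h i
    (Finset.mem_univ i)
  linarith [pow_eq_zero_iff (n := 2) two_ne_zero |>.1 this]

lemma sum_eq_of_hasDerivAt_sum_eq_zero {x x' : ℝ → ι → ℝ} {t₀ : ℝ}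
    (hx : ∀ t, t₀ ≤ t → HasDerivAt x (x' t) t) (hx' : ∀ t, t₀ ≤ t → ∑ i, x' t i = 0)
    {t : ℝ} (ht : t₀ ≤ t) : ∑ i, x t i = ∑ i, x t₀ i := by
  have hsum : ∀ s, t₀ ≤ s → HasDerivAt (fun s => ∑ i, x s i) 0 s := fun s hs =>
    hx' s hs ▸ HasDerivAt.fun_sum fun i _ => hasDerivAt_pi.1 (hx s hs) i
  exact constant_of_has_deriv_right_zero
    (fun s hs => (hsum s hs.1).continuousAt.continuousWithinAt)
    (fun s hs => (hsum s hs.1).hasDerivWithinAt) t ⟨ht, le_rfl⟩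

lemma hasDerivAt_sum_sub_sq {x : ℝ → ι → ℝ} {x' : ι → ℝ} {t : ℝ} (hx : HasDerivAt x x' t)
    (c : ℝ) :
    HasDerivAt (fun s => ∑ i, (x s i - c) ^ 2) (2 * ((fun i => x t i - c) ⬝ᵥ x')) t := by
  refine (HasDerivAt.fun_sum fun i (_ : i ∈ Finset.univ) =>
    ((hasDerivAt_pi.1 hx i).sub_const c).fun_pow 2).congr_deriv ?_
  simp only [dotProduct, Finset.mul_sum]
  refine Finset.sum_congr rfl fun i _ => ?_
  push_cast
  ring

end Deviation

noncomputable def consensusFlux {M : Type*} (κ : M → ℝ) (Ω : ℝ → ℝ) (v : M → ℝ) (e : M) : ℝ :=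
  if v e = 0 then 0 else κ e * Ω |v e| / v e

section Flux

variable {M : Type*} [Fintype M] {κ : M → ℝ} {Ω : ℝ → ℝ} {k : ℝ}

lemma dotProduct_consensusFlux (v : M → ℝ) :
    v ⬝ᵥ consensusFlux κ Ω v = ∑ e, if v e = 0 then 0 else κ e * Ω |v e| := by
  refine Finset.sum_congr rfl fun e _ => ?_
  by_cases h : v e = 0 <;> simp [consensusFlux, h, mul_div_cancel₀]

lemma mul_sum_le_dotProduct_consensusFlux (hΩ0 : Ω 0 = 0) (hΩ : ∀ z, 0 ≤ z → 0 ≤ Ω z)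
    (hκ : ∀ e, k ≤ κ e) (v : M → ℝ) : k * ∑ e, Ω |v e| ≤ v ⬝ᵥ consensusFlux κ Ω v := by
  rw [dotProduct_consensusFlux, Finset.mul_sum]
  refine Finset.sum_le_sum fun e _ => ?_
  split_ifs with h
  · simp [h, hΩ0]
  · exact mul_le_mul_of_nonneg_right (hκ e) (hΩ _ (abs_nonneg _))

lemma mul_map_zero_le_dotProduct_consensusFlux (hΩ : Monotone Ω) (hΩ0 : 0 ≤ Ω 0) (hk : 0 ≤ k)
    (hκ : ∀ e, k ≤ κ e) {v : M → ℝ} (hv : v ≠ 0) : k * Ω 0 ≤ v ⬝ᵥ consensusFlux κ Ω v := by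
  obtain ⟨e, he⟩ : ∃ e, v e ≠ 0 := Function.ne_iff.mp hv
  have hterm : ∀ e, 0 ≤ if v e = 0 then 0 else κ e * Ω |v e| := fun e => by
    split_ifs
    · exact le_rfl
    · exact mul_nonneg (hk.trans (hκ e)) (hΩ0.trans (hΩ (abs_nonneg _)))
  rw [dotProduct_consensusFlux]
  refine le_trans ?_ (Finset.single_le_sum (fun e _ => hterm e) (Finset.mem_univ e))
  rw [if_neg he]
  exact mul_le_mul (hκ e) (hΩ (abs_nonneg _)) hΩ0 (hk.trans (hκ e))

end Flux

namespace IsPredefinedTimeConsensusFunction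

variable {Ω Ωhat : ℝ → ℝ} {β : ℕ → ℝ} {d : ℝ}
  (h : IsPredefinedTimeConsensusFunction Ω Ωhat β d)
include h

lemma monotone : Monotone Ω := h.1

lemma map_nonneg {z : ℝ} (hz : 0 ≤ z) : 0 ≤ Ω z := h.2.1 z hz

lemma Ωhat_pos {z : ℝ} (hz : 0 < z) : 0 < Ωhat z := h.2.2.2.1 z hz

lemma continuousOn_Ωhat_div : ContinuousOn (fun z => Ωhat z / z) (Set.Ioi 0) := h.2.2.2.2.1

lemma antitone_β : Antitone β := h.2.2.2.2.2.1

lemma β_pos (N : ℕ) : 0 < β N := h.2.2.2.2.2.2.1 N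

lemma integral_div_Ωhat : ∫ z in Set.Ioi 0, z / Ωhat z = 1 := h.2.2.2.2.2.2.2.2.2

lemma integrableOn_div_Ωhat : IntegrableOn (fun z => z / Ωhat z) (Set.Ioi 0) := by
  by_contra hint
  simpa [integral_undef hint] using h.integral_div_Ωhat

lemma Ωhat_le_mul_sum {N M : ℕ}
    (hNM : N ≤ M) {v : Fin M → ℝ} (hv : v ≠ 0) {r : ℝ} (hr0 : 0 ≤ r)
    (hr : r ^ 2 ≤ β M ^ 2 * (v ⬝ᵥ v)) : Ωhat r ≤ β N ^ d * ∑ e, Ω |v e| := by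
  obtain ⟨-, hΩ, hΩhat, -, -, hβ, hβpos, hd, hle, -⟩ := h
  have hM : 1 ≤ M := by
    by_contra! hM
    obtain rfl : M = 0 := by omega
    exact hv (Subsingleton.elim _ _)
  have hr' : r ≤ β M * √(∑ e, |v e| ^ 2) := by
    have hvv : v ⬝ᵥ v = ∑ e, |v e| ^ 2 := by simp [dotProduct, sq]
    calc r ≤ √(β M ^ 2 * (v ⬝ᵥ v)) := Real.le_sqrt_of_sq_le hr
      _ = β M * √(∑ e, |v e| ^ 2) := by
        rw [Real.sqrt_mul (sq_nonneg _), Real.sqrt_sq (hβpos M).le, hvv]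
  calc Ωhat r ≤ Ωhat (β M * √(∑ e, |v e| ^ 2)) := hΩhat hr0 (hr0.trans hr') hr'
    _ ≤ β M ^ d * ∑ e, Ω |v e| := hle M hM _ fun e => abs_nonneg _
    _ ≤ β N ^ d * ∑ e, Ω |v e| := by
        gcongr
        · exact Finset.sum_nonneg fun e _ => hΩ _ (abs_nonneg _)
        · exact (hβpos M).le
        · exact hβ hNM

lemma mul_Ωhat_le_dotProduct_consensusFlux (hΩ0 : Ω 0 = 0) {M N : ℕ} (hNM : N ≤ M)
    {κ : Fin M → ℝ} {k : ℝ} (hk : 0 ≤ k)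
    (hκ : ∀ e, k ≤ κ e) {v : Fin M → ℝ} (hv : v ≠ 0) {r : ℝ} (hr0 : 0 ≤ r)
    (hr : r ^ 2 ≤ β M ^ 2 * (v ⬝ᵥ v)) :
    k * Ωhat r ≤ β N ^ d * (v ⬝ᵥ consensusFlux κ Ω v) :=
  calc k * Ωhat r ≤ k * (β N ^ d * ∑ e, Ω |v e|) :=
        mul_le_mul_of_nonneg_left (h.Ωhat_le_mul_sum hNM hv hr0 hr) hk
    _ = β N ^ d * (k * ∑ e, Ω |v e|) := by ring
    _ ≤ β N ^ d * (v ⬝ᵥ consensusFlux κ Ω v) :=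
        mul_le_mul_of_nonneg_left (mul_sum_le_dotProduct_consensusFlux hΩ0 (fun _ => h.map_nonneg) hκ v)
          (Real.rpow_nonneg (h.β_pos N).le d)

end IsPredefinedTimeConsensusFunction

lemma hasDerivAt_integral_zero_of_continuousOn_Ioi {f : ℝ → ℝ}
    (hcont : ContinuousOn f (Set.Ioi 0)) (hint : IntegrableOn f (Set.Ioi 0)) {y : ℝ}
    (hy : 0 < y) : HasDerivAt (fun y => ∫ z in 0..y, f z) (f y) y :=
  intervalIntegral.integral_hasDerivAt_right
    ((intervalIntegrable_iff_integrableOn_Ioc_of_le hy.le).2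
      (hint.mono_set Set.Ioc_subset_Ioi_self))
    (hcont.stronglyMeasurableAtFilter isOpen_Ioi y hy)
    (hcont.continuousAt (isOpen_Ioi.mem_nhds hy))

section ScalarComparison

variable {V V' : ℝ → ℝ} {t₀ : ℝ}

lemma hasDerivAt_eq_zero_of_nonneg_of_eq_zero (hV0 : ∀ t, 0 ≤ V t) {t : ℝ}
    (hV : HasDerivAt V (V' t) t) (ht : V t = 0) : V' t = 0 :=
  IsLocalMin.hasDerivAt_eq_zero (Filter.Eventually.of_forall fun s => ht ▸ hV0 s) hV

lemma antitoneOn_Ici_of_hasDerivAt_nonneg (hV0 : ∀ t, 0 ≤ V t)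
    (hV : ∀ t, t₀ ≤ t → HasDerivAt V (V' t) t) (hV' : ∀ t, t₀ ≤ t → 0 < V t → V' t ≤ 0) :
    AntitoneOn V (Set.Ici t₀) := by
  refine antitoneOn_of_hasDerivWithinAt_nonpos (convex_Ici t₀)
    (fun t ht => (hV t ht).continuousAt.continuousWithinAt)
    (fun t ht => (hV t (interior_subset ht)).hasDerivWithinAt) fun t ht => ?_
  have ht : t₀ ≤ t := interior_subset (s := Set.Ici t₀) ht
  rcases (hV0 t).eq_or_lt with h | h
  · exact (hasDerivAt_eq_zero_of_nonneg_of_eq_zero hV0 (hV t ht) h.symm).le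
  · exact hV' t ht h

lemma eq_zero_of_hasDerivAt_le_neg_mul_Ωhat {Ωhat : ℝ → ℝ} (hpos : ∀ z, 0 < z → 0 < Ωhat z)
    (hcont : ContinuousOn (fun z => Ωhat z / z) (Set.Ioi 0))
    (hint : IntegrableOn (fun z => z / Ωhat z) (Set.Ioi 0)) {c : ℝ} (hc : 0 < c)
    (hV0 : ∀ t, 0 ≤ V t) (hV : ∀ t, t₀ ≤ t → HasDerivAt V (V' t) t)
    (hV' : ∀ t, t₀ ≤ t → 0 < V t → V' t ≤ -2 * c * Ωhat √(V t)) :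
    ∀ t, t₀ + (∫ z in Set.Ioi 0, z / Ωhat z) / c ≤ t → V t = 0 := by
  set f : ℝ → ℝ := fun z => z / Ωhat z
  set G : ℝ → ℝ := fun y => ∫ z in 0..y, f z
  have hf_pos : ∀ z, 0 < z → 0 < f z := fun z hz => div_pos hz (hpos z hz)
  have hf_cont : ContinuousOn f (Set.Ioi 0) :=
    (hcont.inv₀ fun z hz => (div_pos (hpos z hz) hz).ne').congr fun z _ => (inv_div _ _).symm
  have hG_pos : ∀ y, 0 < y → 0 < G y := fun y hy =>
    intervalIntegral.intervalIntegral_pos_of_pos_on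
      ((intervalIntegrable_iff_integrableOn_Ioc_of_le hy.le).2
        (hint.mono_set Set.Ioc_subset_Ioi_self))
      (fun z hz => hf_pos z hz.1) hy
  have hG_le : ∀ y, 0 < y → G y ≤ ∫ z in Set.Ioi 0, f z := fun y hy => by
    simp only [G, intervalIntegral.integral_of_le hy.le]
    exact setIntegral_mono_set hint
      ((ae_restrict_iff' measurableSet_Ioi).2 (.of_forall fun z hz => (hf_pos z hz).le))
      Set.Ioc_subset_Ioi_self.eventuallyLE
  have hV_anti : AntitoneOn V (Set.Ici t₀) := antitoneOn_Ici_of_hasDerivAt_nonneg hV0 hV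
    fun t ht h => (hV' t ht h).trans (by nlinarith [hpos _ (Real.sqrt_pos.2 h)])
  intro t₁ ht₁
  by_contra hne
  have ht₀₁ : t₀ < t₁ := by
    have := div_pos ((hG_pos 1 one_pos).trans_le (hG_le 1 one_pos)) hc
    linarith
  have hV_pos : ∀ s ∈ Set.Icc t₀ t₁, 0 < V s := fun s hs =>
    ((hV0 t₁).lt_of_ne' hne).trans_le (hV_anti hs.1 (hs.1.trans hs.2) hs.2)
  have hψ : ∀ s ∈ Set.Icc t₀ t₁,
      HasDerivAt (fun s => G √(V s) + c * s) (f √(V s) * (V' s / (2 * √(V s))) + c) s :=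
    fun s hs => by
      have hG : HasDerivAt G (f √(V s)) √(V s) :=
        hasDerivAt_integral_zero_of_continuousOn_Ioi hf_cont hint (Real.sqrt_pos.2 (hV_pos s hs))
      exact (hG.comp s ((hV s hs.1).sqrt (hV_pos s hs).ne')).fun_add
        (((hasDerivAt_id' s).const_mul c).congr_deriv (mul_one c))
  have hψ' : ∀ s ∈ Set.Icc t₀ t₁, f √(V s) * (V' s / (2 * √(V s))) + c ≤ 0 := fun s hs => by
    have hsqrt := Real.sqrt_pos.2 (hV_pos s hs)
    have hΩhat := hpos _ hsqrt
    have hV's := hV' s hs.1 (hV_pos s hs)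
    have : f √(V s) * (V' s / (2 * √(V s))) = V' s / (2 * Ωhat √(V s)) := by
      simp only [f]
      field_simp
    rw [this, div_add' _ _ _ (by positivity), div_nonpos_iff]
    right
    constructor <;> nlinarith
  obtain ⟨ξ, hξ, hslope⟩ := exists_hasDerivAt_eq_slope _ _ ht₀₁
    (fun s hs => (hψ s hs).continuousAt.continuousWithinAt)
    (fun s hs => hψ s (Set.Ioo_subset_Icc_self hs))
  have hdec := hslope ▸ hψ' ξ (Set.Ioo_subset_Icc_self hξ)
  rw [div_le_iff₀ (sub_pos.2 ht₀₁), zero_mul] at hdec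
  have hI : (∫ z in Set.Ioi 0, f z) ≤ c * (t₁ - t₀) := by
    rw [← div_le_iff₀' hc]
    linarith
  have := hG_pos _ (Real.sqrt_pos.2 (hV_pos t₁ (Set.right_mem_Icc.2 ht₀₁.le)))
  have := hG_le _ (Real.sqrt_pos.2 (hV_pos t₀ (Set.left_mem_Icc.2 ht₀₁.le)))
  linarith

lemma eq_zero_of_hasDerivAt_le_neg {ε : ℝ} (hε : 0 < ε) (hV0 : ∀ t, 0 ≤ V t)
    (hV : ∀ t, t₀ ≤ t → HasDerivAt V (V' t) t) (hV' : ∀ t, t₀ ≤ t → 0 < V t → V' t ≤ -ε) :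
    ∀ t, t₀ ≤ t → V t = 0 := by
  have hdichotomy : ∀ t, t₀ ≤ t → V' t = 0 ∨ V' t ≤ -ε := fun t ht =>
    (hV0 t).eq_or_lt.imp (fun h => hasDerivAt_eq_zero_of_nonneg_of_eq_zero hV0 (hV t ht) h.symm)
      (hV' t ht)
  intro t₁ ht₁
  by_contra hne
  have hpos : 0 < V t₁ := (hV0 t₁).lt_of_ne' hne
  have ht₁₂ : t₁ < t₁ + V t₁ / ε := lt_add_of_pos_right _ (div_pos hpos hε)
  obtain ⟨s, hs, hVs⟩ : ∃ s ∈ Set.Icc t₁ (t₁ + V t₁ / ε), V s = 0 := by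
    by_contra! hV_ne
    obtain ⟨ξ, hξ, hslope⟩ := exists_hasDerivAt_eq_slope V V' ht₁₂
      (fun s hs => (hV s (ht₁.trans hs.1)).continuousAt.continuousWithinAt)
      (fun s hs => hV s (ht₁.trans hs.1.le))
    have hξ' := hV' ξ (ht₁.trans hξ.1.le)
      ((hV0 ξ).lt_of_ne' (hV_ne ξ (Set.Ioo_subset_Icc_self hξ)))
    rw [hslope, add_sub_cancel_left, div_div_eq_mul_div, div_le_iff₀ hpos] at hξ'
    have hend := (hV0 (t₁ + V t₁ / ε)).lt_of_ne' (hV_ne _ (Set.right_mem_Icc.2 ht₁₂.le))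
    nlinarith
  -- Darboux: `V'` would take the value `-ε / 2` between `t₁` and `s`.
  have hVs' := hasDerivAt_eq_zero_of_nonneg_of_eq_zero hV0 (hV s (ht₁.trans hs.1)) hVs
  obtain ⟨ξ, hξ, hξ'⟩ := exists_hasDerivWithinAt_eq_of_gt_of_lt hs.1
    (fun y hy => (hV y (ht₁.trans hy.1)).hasDerivWithinAt) (m := -ε / 2)
    (by linarith [hV' t₁ ht₁ hpos]) (by linarith)
  rcases hdichotomy ξ (ht₁.trans hξ.1.le) with h | h <;> linarith

end ScalarComparison

section SwitchedFlux

variable {M : ℝ → ℕ} {κ : (t : ℝ) → Fin (M t) → ℝ} {Ω : ℝ → ℝ} {k lam t₀ : ℝ}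
  {v : (t : ℝ) → Fin (M t) → ℝ} {V : ℝ → ℝ}

lemma ne_zero_of_mul_le_dotProduct_self (hlam : 0 < lam) {t : ℝ}
    (hV_le : lam * V t ≤ v t ⬝ᵥ v t) (hVt : 0 < V t) : v t ≠ 0 := by
  rintro hv
  rw [hv, zero_dotProduct] at hV_le
  nlinarith

lemma eq_zero_of_hasDerivAt_consensusFlux_of_map_zero {Ωhat : ℝ → ℝ} {β : ℕ → ℝ} {d : ℝ}
    (hΩ : IsPredefinedTimeConsensusFunction Ω Ωhat β d) (hΩ0 : Ω 0 = 0) {N K : ℕ}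
    (hN : ∀ t, N ≤ M t) (hK : ∀ t, M t ≤ K) (hk : 0 < k) (hκ : ∀ t e, k ≤ κ t e)
    (hlam : 0 < lam) (hV0 : ∀ t, 0 ≤ V t)
    (hV : ∀ t, t₀ ≤ t → HasDerivAt V (-2 * (v t ⬝ᵥ consensusFlux (κ t) Ω (v t))) t)
    (hV_le : ∀ t, t₀ ≤ t → lam * V t ≤ v t ⬝ᵥ v t) :
    ∀ t, t₀ + β N ^ d / (k * lam * β K ^ 2) ≤ t → V t = 0 := by
  have hβN := Real.rpow_pos_of_pos (hΩ.β_pos N) d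
  have hβK := hΩ.β_pos K
  have hc : 0 < k * lam * β K ^ 2 / β N ^ d := by positivity
  -- `W = β(K)² λ V` satisfies `W' ≤ -2c Ω̂(√W)` for `c = k λ β(K)² / β(N)^d`.
  have hW := eq_zero_of_hasDerivAt_le_neg_mul_Ωhat (V := fun t => β K ^ 2 * lam * V t)
    (fun _ => hΩ.Ωhat_pos) hΩ.continuousOn_Ωhat_div hΩ.integrableOn_div_Ωhat hc
    (fun t => by have := hV0 t; positivity) (fun t ht => (hV t ht).const_mul _)
    fun t ht hWt => by
      have hVt : 0 < V t := pos_of_mul_pos_right hWt (by positivity)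
      have hβ : β K ≤ β (M t) := hΩ.antitone_β (hK t)
      have hr : √(β K ^ 2 * lam * V t) ^ 2 ≤ β (M t) ^ 2 * (v t ⬝ᵥ v t) := by
        rw [Real.sq_sqrt hWt.le, mul_assoc]
        exact mul_le_mul (pow_le_pow_left₀ hβK.le hβ 2) (hV_le t ht) (by positivity)
          (by positivity)
      have key := hΩ.mul_Ωhat_le_dotProduct_consensusFlux hΩ0 (hN t) hk.le (hκ t)
        (ne_zero_of_mul_le_dotProduct_self hlam (hV_le t ht) hVt) (Real.sqrt_nonneg _) hr
      rw [← div_le_iff₀' hβN] at key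
      calc β K ^ 2 * lam * (-2 * (v t ⬝ᵥ consensusFlux (κ t) Ω (v t)))
          = -(2 * (β K ^ 2 * lam) * (v t ⬝ᵥ consensusFlux (κ t) Ω (v t))) := by ring
        _ ≤ -(2 * (β K ^ 2 * lam) * (k * Ωhat √(β K ^ 2 * lam * V t) / β N ^ d)) := by
            gcongr
        _ = _ := by ring
  intro t ht
  rw [hΩ.integral_div_Ωhat, one_div_div] at hW
  exact (mul_eq_zero.1 (hW t ht)).resolve_left (by positivity)

lemma eq_zero_of_hasDerivAt_consensusFlux_of_map_zero_pos (hΩ : Monotone Ω) (hΩ0 : 0 < Ω 0)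
    (hk : 0 < k) (hκ : ∀ t e, k ≤ κ t e) (hlam : 0 < lam) (hV0 : ∀ t, 0 ≤ V t)
    (hV : ∀ t, t₀ ≤ t → HasDerivAt V (-2 * (v t ⬝ᵥ consensusFlux (κ t) Ω (v t))) t)
    (hV_le : ∀ t, t₀ ≤ t → lam * V t ≤ v t ⬝ᵥ v t) : ∀ t, t₀ ≤ t → V t = 0 :=
  eq_zero_of_hasDerivAt_le_neg (by positivity : 0 < 2 * (k * Ω 0)) hV0 hV fun t ht hVt => by
    have := mul_map_zero_le_dotProduct_consensusFlux hΩ hΩ0.le hk.le (hκ t)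
      (ne_zero_of_mul_le_dotProduct_self hlam (hV_le t ht) hVt)
    linarith

end SwitchedFlux

theorem stmt12_general {ι : Type} {n : ℕ}
    (m : ι → ℕ) (D : (l : ι) → Matrix (Fin n) (Fin (m l)) ℝ)
    (hD : ∀ l, ∀ j, (∑ i, D l i j) = 0)
    (lam : ℝ) (hlam : 0 < lam)
    (hRay : ∀ l, ∀ δ : Fin n → ℝ, (∑ i, δ i) = 0 →
      lam * (∑ i, δ i ^ 2) ≤ δ ⬝ᵥ ((D l * (D l)ᵀ).mulVec δ))
    (mlow mhigh : ℕ)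
    (hmlow : IsLeast (Set.range m) mlow) (hmhigh : IsGreatest (Set.range m) mhigh)
    (Ω Ωhat : ℝ → ℝ) (β : ℕ → ℝ) (d : ℝ)
    (hΩ : IsPredefinedTimeConsensusFunction Ω Ωhat β d)
    (κ : (l : ι) → Fin (m l) → ℝ) (k : ℝ) (hk : 0 < k) (hκ : ∀ l e, k ≤ κ l e)
    (F : (l : ι) → (Fin (m l) → ℝ) → (Fin (m l) → ℝ))
    (hF : ∀ l v e, F l v e = if v e = 0 then 0 else κ l e * Ω |v e| / v e)
    (σ : ℝ → ι) (t₀ : ℝ) (x : ℝ → Fin n → ℝ)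
    (hx : ∀ t, t₀ ≤ t →
      HasDerivAt x (-(D (σ t)).mulVec (F (σ t) ((D (σ t))ᵀ.mulVec (x t)))) t) :
    ∀ t, t₀ + β mlow ^ d / (k * lam * β mhigh ^ 2) ≤ t →
      ∀ i, x t i = (1 / (n : ℝ)) * ∑ j, x t₀ j := by
  obtain rfl : F = fun l => consensusFlux (κ l) Ω := by
    funext l v e
    exact hF l v e
  set c := (1 / (n : ℝ)) * ∑ j, x t₀ j
  have hdev : ∀ t, t₀ ≤ t → ∑ i, (x t i - c) = 0 := fun t ht =>
    sum_sub_average_eq_zero_of_sum_eq (sum_eq_of_hasDerivAt_sum_eq_zero hx (fun s _ => by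
      simp only [Pi.neg_apply, Finset.sum_neg_distrib,
        sum_mulVec_eq_zero_of_sum_col_eq_zero (hD _), neg_zero]) ht)
  have hV : ∀ t, t₀ ≤ t → HasDerivAt (fun s => ∑ i, (x s i - c) ^ 2)
      (-2 * (((D (σ t))ᵀ *ᵥ x t) ⬝ᵥ consensusFlux (κ (σ t)) Ω ((D (σ t))ᵀ *ᵥ x t))) t :=
    fun t ht => (hasDerivAt_sum_sub_sq (hx t ht) c).congr_deriv (by
      rw [dotProduct_neg, sub_const_dotProduct_mulVec_of_sum_col_eq_zero (hD _)]
      ring)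
  have hV_le : ∀ t, t₀ ≤ t →
      lam * ∑ i, (x t i - c) ^ 2 ≤ ((D (σ t))ᵀ *ᵥ x t) ⬝ᵥ ((D (σ t))ᵀ *ᵥ x t) := fun t ht => by
    simpa only [dotProduct_mul_transpose_mulVec, transpose_mulVec_sub_const_of_sum_col_eq_zero
      (hD _)] using hRay (σ t) _ (hdev t ht)
  have hV0 : ∀ t, 0 ≤ ∑ i, (x t i - c) ^ 2 := fun t => Finset.sum_nonneg fun i _ => sq_nonneg _
  intro t ht i
  refine eq_of_sum_sub_sq_eq_zero ?_ i
  rcases (hΩ.map_nonneg le_rfl).eq_or_lt with hΩ0 | hΩ0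
  · exact eq_zero_of_hasDerivAt_consensusFlux_of_map_zero hΩ hΩ0.symm
      (fun t => hmlow.2 ⟨σ t, rfl⟩) (fun t => hmhigh.2 ⟨σ t, rfl⟩) hk (fun t => hκ (σ t)) hlam
      hV0 hV hV_le t ht
  · refine eq_zero_of_hasDerivAt_consensusFlux_of_map_zero_pos hΩ.monotone hΩ0 hk
      (fun t => hκ (σ t)) hlam hV0 hV hV_le t (le_trans (le_add_of_nonneg_right ?_) ht)
    have := hΩ.β_pos mhigh
    exact div_nonneg (Real.rpow_nonneg (hΩ.β_pos mlow).le d) (by positivity)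

/-- fixed-time part of Theorem 2: protocol (i) on a switched dynamic
network reaches average consensus in a fixed time bounded by β(m̲)^d/(κλβ(m̄)²),
independently of the initial condition. -/
theorem stmt12 {ι : Type} [Fintype ι] [Nonempty ι] {n : ℕ} (hn : 1 ≤ n)
    (m : ι → ℕ) (D : (l : ι) → Matrix (Fin n) (Fin (m l)) ℝ)
    (hD : ∀ l, ∀ j, (∑ i, D l i j) = 0)
    (lam : ℝ) (hlam : 0 < lam)
    (hRay : ∀ l, ∀ δ : Fin n → ℝ, (∑ i, δ i) = 0 →
      lam * (∑ i, δ i ^ 2) ≤ δ ⬝ᵥ ((D l * (D l)ᵀ).mulVec δ))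
    (mlow mhigh : ℕ)
    (hmlow : IsLeast (Set.range m) mlow) (hmhigh : IsGreatest (Set.range m) mhigh)
    (Ω Ωhat : ℝ → ℝ) (β : ℕ → ℝ) (d : ℝ)
    (hΩ : IsPredefinedTimeConsensusFunction Ω Ωhat β d)
    (κ : (l : ι) → Fin (m l) → ℝ) (k : ℝ) (hk : 0 < k) (hκ : ∀ l e, k ≤ κ l e)
    (F : (l : ι) → (Fin (m l) → ℝ) → (Fin (m l) → ℝ))
    (hF : ∀ l v e, F l v e = if v e = 0 then 0 else κ l e * Ω |v e| / v e)
    (σ : ℝ → ι) (t₀ : ℝ) (x : ℝ → Fin n → ℝ)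
    (hx : ∀ t, t₀ ≤ t →
      HasDerivAt x (-(D (σ t)).mulVec (F (σ t) ((D (σ t))ᵀ.mulVec (x t)))) t) :
    ∀ t, t₀ + β mlow ^ d / (k * lam * β mhigh ^ 2) ≤ t →
      ∀ i, x t i = (1 / (n : ℝ)) * ∑ j, x t₀ j :=
  stmt12_general m D hD lam hlam hRay mlow mhigh hmlow hmhigh Ω Ωhat β d hΩ κ k hk hκ F hF σ t₀ x hx
end

section
/- Let n ≥ 1 and let {D_l}_{l∈ι} be a finite nonempty family of real n×m_l matrices with every column of every D_l summing to zero. Let λ > 0 satisfy: for every l ∈ ι and every δ ∈ ℝⁿ with Σ_i δ_i = 0, δᵀ(D_l D_lᵀ)δ ≥ λ·‖δ‖₂². Set m̲ = min_l m_l and m̄ = max_l m_l. Let Ω be a predefined-time consensus function with data (Ω̂, β, d), let T_c > 0, and for each l let the gains κ^{(l)}_e (one per column e of D_l) satisfy κ^{(l)}_e ≥ β(m̲)^d/(λ·β(m̄)²·T_c). Define F_l : ℝ^{m_l} → ℝ^{m_l} by F_l(v)_e = κ^{(l)}_e·Ω(|v_e|)/v_e if v_e ≠ 0 and F_l(v)_e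 = 0 if v_e = 0. Let σ : [t₀,∞) → ι be arbitrary and let x : [t₀,∞) → ℝⁿ be differentiable with ẋ(t) = −D_{σ(t)}·F_{σ(t)}(D_{σ(t)}ᵀ x(t)) for all t ≥ t₀. Then for all t ≥ t₀ + T_c and all i, x_i(t) = (1/n)·Σ_{j=1}^n x_j(t₀); i.e. consensus on the average of the initial conditions is reached within the predefined time T_c. -/
open Matrix MeasureTheory

/-!
Column sums zero make `∑ᵢ xᵢ` invariant, so `V = ∑ᵢ (xᵢ - x̄)²` with `x̄` the initial average
satisfies `V̇ = -2 ⟪v, F(v)⟫` for `v = Dᵀx`, and the Rayleigh bound gives `λ V ≤ ‖v‖²`.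

If `Ω 0 = 0`, the defining inequality of `Ω̂` and the gain bound turn this into
`ż · z / Ω̂(z) ≤ -1 / T_c` for `z = β(m̄) √(λ V)`; as `∫₀^∞ z / Ω̂(z) dz = 1`, `z` cannot stay
positive for the time `T_c`.

If `Ω 0 > 0`, then `V̇ ≤ -2 κ Ω(0)` wherever `V > 0`, while `V̇ = 0` at the zeros of `V ≥ 0`.
Darboux's theorem forbids such a jump of a derivative, so `V` vanishes from the start: a
classical solution of the discontinuous protocol exists only at consensus.
-/

open Set

lemma antitoneOn_of_hasDerivAt_nonpos {s : Set ℝ} (hs : Convex ℝ s) {f f' : ℝ → ℝ}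
    (hf : ∀ x ∈ s, HasDerivAt f (f' x) x) (hf' : ∀ x ∈ interior s, f' x ≤ 0) :
    AntitoneOn f s :=
  antitoneOn_of_hasDerivWithinAt_nonpos hs (fun x hx => (hf x hx).continuousAt.continuousWithinAt)
    (fun x hx => (hf x (interior_subset hx)).hasDerivWithinAt) hf'

section SettlingTime

variable {g : ℝ → ℝ}

lemma intervalIntegral_lt_integral_Ioi (hg_pos : ∀ y, 0 < y → 0 < g y)
    (hg_int : IntegrableOn g (Ioi 0)) {Z : ℝ} (hZ : 0 ≤ Z) :
    ∫ y in (0 : ℝ)..Z, g y < ∫ y in Ioi 0, g y := by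
  have hg_tail : ∀ y ∈ Ioi Z, 0 < g y := fun y hy => hg_pos y (hZ.trans_lt hy)
  have hg_int' : IntegrableOn g (Ioi Z) := hg_int.mono_set (Ioi_subset_Ioi hZ)
  have htail : 0 < ∫ y in Ioi Z, g y := by
    rw [setIntegral_pos_iff_support_of_nonneg_ae
      ((ae_restrict_iff' measurableSet_Ioi).2 (.of_forall fun y hy => (hg_tail y hy).le)) hg_int',
      (inter_eq_right (s := Function.support g)).2 fun y hy =>
        Function.mem_support.2 (hg_tail y hy).ne']
    simp
  linarith [intervalIntegral.integral_interval_add_Ioi hg_int hg_int']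

lemma hasDerivAt_intervalIntegral_of_integrableOn_Ioi (hg : ContinuousOn g (Ioi 0))
    (hg_int : IntegrableOn g (Ioi 0)) {Z : ℝ} (hZ : 0 < Z) :
    HasDerivAt (fun Z => ∫ y in (0 : ℝ)..Z, g y) (g Z) Z := by
  have hsub : uIoc 0 Z ⊆ Ioi 0 := by
    rw [uIoc_of_le hZ.le]; exact Ioc_subset_Ioi_self
  exact intervalIntegral.integral_hasDerivAt_right
    (intervalIntegrable_iff.2 (hg_int.mono_set hsub))
    ⟨Ioi 0, Ioi_mem_nhds hZ, hg.aestronglyMeasurable measurableSet_Ioi⟩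
    (hg.continuousAt (Ioi_mem_nhds hZ))

/-- `T ∫₀^{z u} g + u` is antitone in `u`. -/
theorem sub_lt_mul_integral_of_hasDerivAt (hg : ContinuousOn g (Ioi 0))
    (hg_pos : ∀ y, 0 < y → 0 < g y) (hg_int : IntegrableOn g (Ioi 0))
    {z z' : ℝ → ℝ} {a b T : ℝ} (hab : a ≤ b) (hT : 0 < T)
    (hz : ∀ u ∈ Icc a b, HasDerivAt z (z' u) u) (hz_pos : ∀ u ∈ Icc a b, 0 < z u)
    (hdecay : ∀ u ∈ Icc a b, T * (g (z u) * z' u) ≤ -1) :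
    b - a < T * ∫ y in Ioi 0, g y := by
  set Φ : ℝ → ℝ := fun Z => ∫ y in (0 : ℝ)..Z, g y
  have hH : AntitoneOn (fun u => T * Φ (z u) + u) (Icc a b) := by
    refine antitoneOn_of_hasDerivAt_nonpos (convex_Icc a b)
      (fun u hu => (((hasDerivAt_intervalIntegral_of_integrableOn_Ioi hg hg_int (hz_pos u hu)).comp
        u (hz u hu)).const_mul T).add (hasDerivAt_id u)) fun u hu => ?_
    rw [interior_Icc] at hu
    linarith [hdecay u (Ioo_subset_Icc_self hu)]
  have hend := hH (left_mem_Icc.2 hab) (right_mem_Icc.2 hab) hab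
  have hΦb : 0 ≤ Φ (z b) := by
    simp only [Φ, intervalIntegral.integral_of_le (hz_pos b (right_mem_Icc.2 hab)).le]
    exact setIntegral_nonneg measurableSet_Ioc fun y hy => (hg_pos y hy.1).le
  have hΦa := intervalIntegral_lt_integral_Ioi hg_pos hg_int (hz_pos a (left_mem_Icc.2 hab)).le
  simp only at hend
  nlinarith [mul_le_mul_of_nonneg_left hΦb hT.le, mul_lt_mul_of_pos_left hΦa hT]

/-- By Darboux's theorem `V'` cannot jump from `0`, its value at the zeros of `V ≥ 0`, to values
`≤ -C`; so `V' ≤ -C` on all of `[a, ∞)`, which is incompatible with `V ≥ 0`. -/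
theorem eq_zero_of_hasDerivAt_le_neg_s13 {V V' : ℝ → ℝ} {a C : ℝ} (hC : 0 < C)
    (hV_nonneg : ∀ u, 0 ≤ V u) (hV : ∀ u, a ≤ u → HasDerivAt V (V' u) u)
    (hdecay : ∀ u, a ≤ u → 0 < V u → V' u ≤ -C) : V a = 0 := by
  have hV' : ∀ u, a ≤ u → V' u = 0 ∨ V' u ≤ -C := fun u hu => by
    rcases (hV_nonneg u).eq_or_lt with h0 | hpos
    · refine .inl (IsLocalMin.hasDerivAt_eq_zero (.of_forall fun w => ?_) (hV u hu))
      rw [← h0]; exact hV_nonneg w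
    · exact .inr (hdecay u hu hpos)
  by_contra ha
  have ha' : V' a ≤ -C := hdecay a le_rfl ((hV_nonneg a).lt_of_ne' ha)
  have hle : ∀ u, a ≤ u → V' u ≤ -C := fun u hu => by
    refine (hV' u hu).resolve_left fun h0 => ?_
    obtain ⟨w, hw, hw'⟩ := exists_hasDerivWithinAt_eq_of_gt_of_lt hu
      (fun w hw => (hV w hw.1).hasDerivWithinAt) (m := -C / 2) (by linarith) (by linarith)
    rcases hV' w hw.1.le with h | h <;> linarith
  have hanti : AntitoneOn (fun u => V u + C * u) (Ici a) :=
    antitoneOn_of_hasDerivAt_nonpos (convex_Ici a)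
      (fun u hu => (hV u hu).add ((hasDerivAt_id u).const_mul C))
      fun u hu => by rw [interior_Ici] at hu; linarith [hle u hu.le]
  have hb : a ≤ a + V a / C + 1 := by have := div_nonneg (hV_nonneg a) hC.le; linarith
  have := hanti self_mem_Ici hb hb
  simp only [mul_add, mul_div_cancel₀ _ hC.ne'] at this
  linarith [hV_nonneg (a + V a / C + 1)]

lemma dotProduct_mul_transpose_mulVec_s13 {n m : ℕ} (D : Matrix (Fin n) (Fin m) ℝ) (w : Fin n → ℝ) :
    w ⬝ᵥ (D * Dᵀ) *ᵥ w = ∑ e, (Dᵀ *ᵥ w) e ^ 2 := by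
  rw [← mulVec_mulVec, dotProduct_mulVec, ← mulVec_transpose]
  simp [dotProduct, sq]

section ZeroColumnSums

variable {n m : ℕ} {D : Matrix (Fin n) (Fin m) ℝ}

lemma sum_mulVec_eq_zero (hD : ∀ j, ∑ i, D i j = 0) (w : Fin m → ℝ) :
    ∑ i, (D *ᵥ w) i = 0 := by
  simp only [mulVec, dotProduct]
  rw [Finset.sum_comm]
  simp [← Finset.sum_mul, hD]

lemma transpose_mulVec_sub_const (hD : ∀ j, ∑ i, D i j = 0) (w : Fin n → ℝ) (c : ℝ) :
    Dᵀ *ᵥ (fun i => w i - c) = Dᵀ *ᵥ w := by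
  ext e
  simp [mulVec, dotProduct, mul_sub, Finset.sum_sub_distrib, ← Finset.sum_mul, hD]

lemma sub_const_dotProduct_mulVec (hD : ∀ j, ∑ i, D i j = 0) (w : Fin n → ℝ) (c : ℝ)
    (y : Fin m → ℝ) : (fun i => w i - c) ⬝ᵥ D *ᵥ y = (Dᵀ *ᵥ w) ⬝ᵥ y := by
  rw [dotProduct_mulVec, ← mulVec_transpose, transpose_mulVec_sub_const hD]

lemma mul_sum_sq_sub_le_sum_sq (hD : ∀ j, ∑ i, D i j = 0) {lam : ℝ}
    (hRay : ∀ δ : Fin n → ℝ, ∑ i, δ i = 0 → lam * ∑ i, δ i ^ 2 ≤ δ ⬝ᵥ (D * Dᵀ) *ᵥ δ)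
    (w : Fin n → ℝ) (c : ℝ) (hwc : ∑ i, (w i - c) = 0) :
    lam * ∑ i, (w i - c) ^ 2 ≤ ∑ e, (Dᵀ *ᵥ w) e ^ 2 := by
  simpa only [dotProduct_mul_transpose_mulVec_s13, transpose_mulVec_sub_const hD] using hRay _ hwc

end ZeroColumnSums

lemma hasDerivAt_sum_sq_sub_const {n : ℕ} {x : ℝ → Fin n → ℝ} {x' : Fin n → ℝ} {t : ℝ}
    (hx : HasDerivAt x x' t) (c : ℝ) :
    HasDerivAt (fun r => ∑ j, (x r j - c) ^ 2) (2 * (fun j => x t j - c) ⬝ᵥ x') t := by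
  have := HasDerivAt.fun_sum fun j (_ : j ∈ Finset.univ) =>
    ((hasDerivAt_pi.1 hx j).sub_const c).pow 2
  simpa [dotProduct, Finset.mul_sum, mul_assoc, mul_comm, mul_left_comm] using this

lemma eq_of_sum_sq_sub_nonpos {n : ℕ} {w : Fin n → ℝ} {c : ℝ} (h : ∑ j, (w j - c) ^ 2 ≤ 0)
    (i : Fin n) : w i = c := by
  have hi := (Finset.sum_eq_zero_iff_of_nonneg fun j _ => sq_nonneg (w j - c)).1
    (h.antisymm (Finset.sum_nonneg fun j _ => sq_nonneg _)) i (Finset.mem_univ i)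
  linarith [pow_eq_zero_iff two_ne_zero |>.1 hi]

section SwitchedProtocol

variable {ι : Type} {n : ℕ} {m : ι → ℕ} {D : (l : ι) → Matrix (Fin n) (Fin (m l)) ℝ}
  {σ : ℝ → ι} {x : ℝ → Fin n → ℝ} {w : (t : ℝ) → Fin (m (σ t)) → ℝ} {t₀ : ℝ}

lemma sum_apply_eq_of_hasDerivAt_neg_mulVec (hD : ∀ l j, ∑ i, D l i j = 0)
    (hx : ∀ t, t₀ ≤ t → HasDerivAt x (-(D (σ t) *ᵥ w t)) t) {t : ℝ} (ht : t₀ ≤ t) :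
    ∑ j, x t j = ∑ j, x t₀ j := by
  have hsum : ∀ r, t₀ ≤ r → HasDerivAt (fun r => ∑ j, x r j) 0 r := fun r hr => by
    have := HasDerivAt.fun_sum fun j (_ : j ∈ Finset.univ) => hasDerivAt_pi.1 (hx r hr) j
    simpa only [Pi.neg_apply, Finset.sum_neg_distrib, sum_mulVec_eq_zero (hD (σ r)),
      neg_zero] using this
  exact constant_of_has_deriv_right_zero (fun r hr => (hsum r hr.1).continuousAt.continuousWithinAt)
    (fun r hr => (hsum r hr.1).hasDerivWithinAt) t (right_mem_Icc.2 ht)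

lemma hasDerivAt_sum_sq_sub_const_of_neg_mulVec (hD : ∀ l j, ∑ i, D l i j = 0)
    (hx : ∀ t, t₀ ≤ t → HasDerivAt x (-(D (σ t) *ᵥ w t)) t) (c : ℝ) {t : ℝ} (ht : t₀ ≤ t) :
    HasDerivAt (fun r => ∑ j, (x r j - c) ^ 2) (-2 * ((D (σ t))ᵀ *ᵥ x t) ⬝ᵥ w t) t := by
  have := hasDerivAt_sum_sq_sub_const (hx t ht) c
  rwa [dotProduct_neg, sub_const_dotProduct_mulVec (hD (σ t)), mul_neg, ← neg_mul] at this

lemma mul_sum_sq_sub_average_le (hD : ∀ l j, ∑ i, D l i j = 0) {lam : ℝ}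
    (hRay : ∀ l, ∀ δ : Fin n → ℝ, ∑ i, δ i = 0 → lam * ∑ i, δ i ^ 2 ≤ δ ⬝ᵥ (D l * (D l)ᵀ) *ᵥ δ)
    (hx : ∀ t, t₀ ≤ t → HasDerivAt x (-(D (σ t) *ᵥ w t)) t) (hn : n ≠ 0) {t : ℝ} (ht : t₀ ≤ t) :
    lam * ∑ i, (x t i - (1 / (n : ℝ)) * ∑ j, x t₀ j) ^ 2 ≤ ∑ e, ((D (σ t))ᵀ *ᵥ x t) e ^ 2 := by
  refine mul_sum_sq_sub_le_sum_sq (hD (σ t)) (hRay (σ t)) (x t) _ ?_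
  rw [Finset.sum_sub_distrib, sum_apply_eq_of_hasDerivAt_neg_mulVec hD hx ht]
  have hn' : (n : ℝ) ≠ 0 := Nat.cast_ne_zero.2 hn
  simp only [Finset.sum_const, Finset.card_univ, Fintype.card_fin, nsmul_eq_mul]
  field_simp
  ring

end SwitchedProtocol

section FeedbackLaw

variable {m : ℕ} {κ : Fin m → ℝ} {Ω : ℝ → ℝ} {F : (Fin m → ℝ) → Fin m → ℝ}

lemma mul_apply_eq_ite (hF : ∀ v e, F v e = if v e = 0 then 0 else κ e * Ω |v e| / v e)
    (v : Fin m → ℝ) (e : Fin m) :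
    v e * F v e = if v e = 0 then 0 else κ e * Ω |v e| := by
  rw [hF]
  split_ifs with h
  · exact mul_zero _
  · exact mul_div_cancel₀ _ h

lemma mul_apply_nonneg (hF : ∀ v e, F v e = if v e = 0 then 0 else κ e * Ω |v e| / v e)
    (hκ : ∀ e, 0 ≤ κ e) (hΩ : ∀ z, 0 ≤ z → 0 ≤ Ω z) (v : Fin m → ℝ) (e : Fin m) :
    0 ≤ v e * F v e := by
  rw [mul_apply_eq_ite hF]
  split_ifs
  exacts [le_rfl, mul_nonneg (hκ e) (hΩ _ (abs_nonneg _))]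

lemma dotProduct_apply_nonneg (hF : ∀ v e, F v e = if v e = 0 then 0 else κ e * Ω |v e| / v e)
    (hκ : ∀ e, 0 ≤ κ e) (hΩ : ∀ z, 0 ≤ z → 0 ≤ Ω z) (v : Fin m → ℝ) : 0 ≤ v ⬝ᵥ F v :=
  Finset.sum_nonneg fun e _ => mul_apply_nonneg hF hκ hΩ v e

lemma mul_sum_le_dotProduct_apply
    (hF : ∀ v e, F v e = if v e = 0 then 0 else κ e * Ω |v e| / v e) {k : ℝ}
    (hκ : ∀ e, k ≤ κ e) (hΩ : ∀ z, 0 ≤ z → 0 ≤ Ω z) (hΩ0 : Ω 0 = 0) (v : Fin m → ℝ) :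
    k * ∑ e, Ω |v e| ≤ v ⬝ᵥ F v := by
  rw [Finset.mul_sum]
  refine Finset.sum_le_sum fun e _ => ?_
  rw [mul_apply_eq_ite hF]
  split_ifs with h
  · simp [h, hΩ0]
  · exact mul_le_mul_of_nonneg_right (hκ e) (hΩ _ (abs_nonneg _))

lemma mul_le_dotProduct_apply
    (hF : ∀ v e, F v e = if v e = 0 then 0 else κ e * Ω |v e| / v e) {k : ℝ} (hk : 0 ≤ k)
    (hκ : ∀ e, k ≤ κ e) (hΩ_mono : Monotone Ω) (hΩ : ∀ z, 0 ≤ z → 0 ≤ Ω z)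
    {v : Fin m → ℝ} (hv : v ≠ 0) : k * Ω 0 ≤ v ⬝ᵥ F v := by
  obtain ⟨e, he⟩ := Function.ne_iff.1 hv
  calc k * Ω 0 ≤ κ e * Ω |v e| :=
        mul_le_mul (hκ e) (hΩ_mono (abs_nonneg _)) (hΩ 0 le_rfl) (hk.trans (hκ e))
    _ = v e * F v e := by rw [mul_apply_eq_ite hF, if_neg (by simpa using he)]
    _ ≤ v ⬝ᵥ F v := Finset.single_le_sum (f := fun e => v e * F v e)
        (fun e _ => mul_apply_nonneg hF (fun e => hk.trans (hκ e)) hΩ v e) (Finset.mem_univ e)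

end FeedbackLaw

namespace IsPredefinedTimeConsensusFunction

variable {Ω Ωhat : ℝ → ℝ} {β : ℕ → ℝ} {d : ℝ}

lemma continuousOn_id_div (hΩ : IsPredefinedTimeConsensusFunction Ω Ωhat β d) :
    ContinuousOn (fun y => y / Ωhat y) (Ioi 0) := by
  obtain ⟨-, -, -, hΩhat_pos, hcont, -⟩ := hΩ
  refine (hcont.inv₀ fun y hy => (div_pos (hΩhat_pos y hy) hy).ne').congr fun y _ => ?_
  simp only [Pi.inv_apply, inv_div]

lemma integrableOn_id_div (hΩ : IsPredefinedTimeConsensusFunction Ω Ωhat β d) :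
    IntegrableOn (fun y => y / Ωhat y) (Ioi 0) :=
  .of_integral_ne_zero (by rw [hΩ.2.2.2.2.2.2.2.2.2]; exact one_ne_zero)

/-- `z = K √V` satisfies `ż · z / Ω̂(z) ≤ -1/T`, and `∫₀^∞ z / Ω̂(z) dz = 1`. -/
theorem le_zero_of_hasDerivAt (hΩ : IsPredefinedTimeConsensusFunction Ω Ωhat β d)
    {V P : ℝ → ℝ} {K T a : ℝ} (hK : 0 < K) (hT : 0 < T)
    (hV : ∀ u ∈ Icc a (a + T), HasDerivAt V (-2 * P u) u)
    (hP_nonneg : ∀ u ∈ Icc a (a + T), 0 ≤ P u)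
    (hP : ∀ u ∈ Icc a (a + T), 0 < V u → Ωhat (K * √(V u)) ≤ K ^ 2 * T * P u) :
    V (a + T) ≤ 0 := by
  have hg_cont := hΩ.continuousOn_id_div
  have hg_int := hΩ.integrableOn_id_div
  obtain ⟨-, -, -, hΩhat_pos, -, -, -, -, -, hint⟩ := hΩ
  by_contra! hVend
  have haT : a ≤ a + T := by linarith
  have hV_anti : AntitoneOn V (Icc a (a + T)) :=
    antitoneOn_of_hasDerivAt_nonpos (convex_Icc _ _) hV fun u hu => by
      linarith [hP_nonneg u (interior_subset hu)]
  have hV_pos : ∀ u ∈ Icc a (a + T), 0 < V u := fun u hu =>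
    hVend.trans_le (hV_anti hu (right_mem_Icc.2 haT) hu.2)
  have hsettle := sub_lt_mul_integral_of_hasDerivAt hg_cont
    (fun y hy => div_pos hy (hΩhat_pos y hy)) hg_int haT hT
    (fun u hu => ((hV u hu).sqrt (hV_pos u hu).ne').const_mul K)
    (fun u hu => mul_pos hK (Real.sqrt_pos.2 (hV_pos u hu))) fun u hu => by
      have hsqrt := Real.sqrt_pos.2 (hV_pos u hu)
      have hΩhat := hΩhat_pos _ (mul_pos hK hsqrt)
      have hrate : T * (K * √(V u) / Ωhat (K * √(V u)) * (K * (-2 * P u / (2 * √(V u)))))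
          = -(K ^ 2 * T * P u) / Ωhat (K * √(V u)) := by
        field_simp
      rw [hrate, div_le_iff₀ hΩhat]
      linarith [hP u hu (hV_pos u hu)]
  rw [hint] at hsettle
  linarith

lemma Ωhat_le_rpow_mul_sum (hΩ : IsPredefinedTimeConsensusFunction Ω Ωhat β d) {m : ℕ}
    (hm : 1 ≤ m) (v : Fin m → ℝ) {y : ℝ} (hy0 : 0 ≤ y) (hy : y ≤ β m * √(∑ e, v e ^ 2)) :
    Ωhat y ≤ β m ^ d * ∑ e, Ω |v e| := by
  obtain ⟨-, -, hΩhat_mono, -, -, -, hβ_pos, -, hineq, -⟩ := hΩ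
  calc Ωhat y ≤ Ωhat (β m * √(∑ e, |v e| ^ 2)) :=
        hΩhat_mono hy0 (mul_nonneg (hβ_pos m).le (Real.sqrt_nonneg _)) (by simpa only [sq_abs])
    _ ≤ β m ^ d * ∑ e, Ω |v e| := hineq m hm (fun e => |v e|) fun e => abs_nonneg _

lemma gain_pos (hΩ : IsPredefinedTimeConsensusFunction Ω Ωhat β d) (mlow mhigh : ℕ) {lam T : ℝ}
    (hlam : 0 < lam) (hT : 0 < T) : 0 < β mlow ^ d / (lam * β mhigh ^ 2 * T) := by
  have := hΩ.2.2.2.2.2.2.1 mhigh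
  have := Real.rpow_pos_of_pos (hΩ.2.2.2.2.2.2.1 mlow) d
  positivity

lemma Ωhat_le_of_le_gain (hΩ : IsPredefinedTimeConsensusFunction Ω Ωhat β d) (hΩ0 : Ω 0 = 0)
    {m mlow mhigh : ℕ} (hlow : mlow ≤ m) (hhigh : m ≤ mhigh) {lam T : ℝ} (hlam : 0 < lam)
    (hT : 0 < T) {κ : Fin m → ℝ} (hκ : ∀ e, β mlow ^ d / (lam * β mhigh ^ 2 * T) ≤ κ e)
    {F : (Fin m → ℝ) → Fin m → ℝ}
    (hF : ∀ v e, F v e = if v e = 0 then 0 else κ e * Ω |v e| / v e)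
    {v : Fin m → ℝ} {V : ℝ} (hV : 0 < V) (hVv : lam * V ≤ ∑ e, v e ^ 2) :
    Ωhat (β mhigh * √lam * √V) ≤ (β mhigh * √lam) ^ 2 * T * (v ⬝ᵥ F v) := by
  have hm : 1 ≤ m := Nat.one_le_iff_ne_zero.2 fun hm => by
    subst hm
    simp only [Finset.univ_eq_empty, Finset.sum_empty] at hVv
    nlinarith
  have hΩhat_le := hΩ.Ωhat_le_rpow_mul_sum hm v (y := β mhigh * √lam * √V)
  obtain ⟨-, hΩ_nonneg, -, -, -, hβ_anti, hβ_pos, hd, -, -⟩ := hΩ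
  have hsum_nonneg : 0 ≤ ∑ e, Ω |v e| := Finset.sum_nonneg fun e _ => hΩ_nonneg _ (abs_nonneg _)
  have hβlow := hβ_pos mlow
  have hβhigh := hβ_pos mhigh
  calc Ωhat (β mhigh * √lam * √V) ≤ β m ^ d * ∑ e, Ω |v e| := by
        refine hΩhat_le (by positivity) ?_
        rw [mul_assoc, ← Real.sqrt_mul hlam.le]
        exact mul_le_mul (hβ_anti hhigh) (Real.sqrt_le_sqrt hVv) (Real.sqrt_nonneg _)
          (hβ_pos m).le
    _ ≤ β mlow ^ d * ∑ e, Ω |v e| := mul_le_mul_of_nonneg_right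
        (Real.rpow_le_rpow (hβ_pos m).le (hβ_anti hlow) (by linarith)) hsum_nonneg
    _ = (β mhigh * √lam) ^ 2 * T * (β mlow ^ d / (lam * β mhigh ^ 2 * T) * ∑ e, Ω |v e|) := by
        rw [mul_pow, Real.sq_sqrt hlam.le]
        field_simp
    _ ≤ (β mhigh * √lam) ^ 2 * T * (v ⬝ᵥ F v) := mul_le_mul_of_nonneg_left
        (mul_sum_le_dotProduct_apply hF hκ hΩ_nonneg hΩ0 v) (by positivity)

lemma mul_le_of_le_gain (hΩ : IsPredefinedTimeConsensusFunction Ω Ωhat β d)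
    {m mlow mhigh : ℕ} {lam T : ℝ} (hlam : 0 < lam) (hT : 0 < T) {κ : Fin m → ℝ}
    (hκ : ∀ e, β mlow ^ d / (lam * β mhigh ^ 2 * T) ≤ κ e) {F : (Fin m → ℝ) → Fin m → ℝ}
    (hF : ∀ v e, F v e = if v e = 0 then 0 else κ e * Ω |v e| / v e)
    {v : Fin m → ℝ} {V : ℝ} (hV : 0 < V) (hVv : lam * V ≤ ∑ e, v e ^ 2) :
    β mlow ^ d / (lam * β mhigh ^ 2 * T) * Ω 0 ≤ v ⬝ᵥ F v :=
  mul_le_dotProduct_apply hF (hΩ.gain_pos mlow mhigh hlam hT).le hκ hΩ.1 hΩ.2.1 fun hv => by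
    have h0 : ∑ e, v e ^ 2 = 0 := by simp [hv]
    nlinarith

end IsPredefinedTimeConsensusFunction

theorem stmt13_general {ι : Type} {n : ℕ}
    (m : ι → ℕ) (D : (l : ι) → Matrix (Fin n) (Fin (m l)) ℝ)
    (hD : ∀ l, ∀ j, (∑ i, D l i j) = 0)
    (lam : ℝ) (hlam : 0 < lam)
    (hRay : ∀ l, ∀ δ : Fin n → ℝ, (∑ i, δ i) = 0 →
      lam * (∑ i, δ i ^ 2) ≤ δ ⬝ᵥ ((D l * (D l)ᵀ).mulVec δ))
    (mlow mhigh : ℕ)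
    (hmlow : IsLeast (Set.range m) mlow) (hmhigh : IsGreatest (Set.range m) mhigh)
    (Ω Ωhat : ℝ → ℝ) (β : ℕ → ℝ) (d : ℝ)
    (hΩ : IsPredefinedTimeConsensusFunction Ω Ωhat β d)
    (Tc : ℝ) (hTc : 0 < Tc)
    (κ : (l : ι) → Fin (m l) → ℝ)
    (hκ : ∀ l e, β mlow ^ d / (lam * β mhigh ^ 2 * Tc) ≤ κ l e)
    (F : (l : ι) → (Fin (m l) → ℝ) → (Fin (m l) → ℝ))
    (hF : ∀ l v e, F l v e = if v e = 0 then 0 else κ l e * Ω |v e| / v e)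
    (σ : ℝ → ι) (t₀ : ℝ) (x : ℝ → Fin n → ℝ)
    (hx : ∀ t, t₀ ≤ t →
      HasDerivAt x (-(D (σ t)).mulVec (F (σ t) ((D (σ t))ᵀ.mulVec (x t)))) t) :
    ∀ t, t₀ + Tc ≤ t →
      ∀ i, x t i = (1 / (n : ℝ)) * ∑ j, x t₀ j := by
  intro t ht i
  have hk := hΩ.gain_pos mlow mhigh hlam hTc
  set c := (1 / (n : ℝ)) * ∑ j, x t₀ j
  set V : ℝ → ℝ := fun t => ∑ j, (x t j - c) ^ 2
  set P : ℝ → ℝ := fun t => (D (σ t))ᵀ *ᵥ x t ⬝ᵥ F (σ t) ((D (σ t))ᵀ *ᵥ x t)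
  have hV : ∀ t, t₀ ≤ t → HasDerivAt V (-2 * P t) t := fun t ht =>
    hasDerivAt_sum_sq_sub_const_of_neg_mulVec hD hx c ht
  have hVv : ∀ t, t₀ ≤ t → lam * V t ≤ ∑ e, ((D (σ t))ᵀ *ᵥ x t) e ^ 2 := fun t ht =>
    mul_sum_sq_sub_average_le hD hRay hx i.pos.ne' ht
  have hP_nonneg : ∀ t, 0 ≤ P t := fun t =>
    dotProduct_apply_nonneg (hF (σ t)) (fun e => hk.le.trans (hκ _ e)) hΩ.2.1 _
  have hV_anti : AntitoneOn V (Ici t₀) :=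
    antitoneOn_of_hasDerivAt_nonpos (convex_Ici t₀) hV fun u _ => by linarith [hP_nonneg u]
  have hTc_mem : t₀ + Tc ∈ Ici t₀ := mem_Ici.2 (by linarith)
  have hV_end : V (t₀ + Tc) ≤ 0 := by
    rcases (hΩ.2.1 0 le_rfl).eq_or_lt with hΩ0 | hΩ0
    · refine hΩ.le_zero_of_hasDerivAt (mul_pos (hΩ.2.2.2.2.2.2.1 mhigh) (Real.sqrt_pos.2 hlam))
        hTc (fun u hu => hV u hu.1) (fun u _ => hP_nonneg u) fun u hu hVu => ?_
      exact hΩ.Ωhat_le_of_le_gain hΩ0.symm (hmlow.2 ⟨_, rfl⟩) (hmhigh.2 ⟨_, rfl⟩) hlam hTc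
        (hκ _) (hF _) hVu (hVv u hu.1)
    · have hV₀ : V t₀ = 0 := eq_zero_of_hasDerivAt_le_neg_s13 (mul_pos two_pos (mul_pos hk hΩ0))
        (fun u => Finset.sum_nonneg fun j _ => sq_nonneg _) hV fun u hu hVu => by
          linarith [hΩ.mul_le_of_le_gain hlam hTc (hκ _) (hF _) hVu (hVv u hu)]
      exact hV₀ ▸ hV_anti self_mem_Ici hTc_mem hTc_mem
  exact eq_of_sum_sq_sub_nonpos
    ((hV_anti hTc_mem (mem_Ici.2 (by linarith)) ht).trans hV_end) i

/-- predefined-time part of Theorem 2: with gains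
κ⁽ˡ⁾ₑ ≥ β(m̲)^d/(λβ(m̄)²T_c), protocol (i) on a switched dynamic network reaches
consensus on the average of the initial conditions within the predefined time T_c. -/
theorem stmt13 {ι : Type} [Fintype ι] [Nonempty ι] {n : ℕ} (hn : 1 ≤ n)
    (m : ι → ℕ) (D : (l : ι) → Matrix (Fin n) (Fin (m l)) ℝ)
    (hD : ∀ l, ∀ j, (∑ i, D l i j) = 0)
    (lam : ℝ) (hlam : 0 < lam)
    (hRay : ∀ l, ∀ δ : Fin n → ℝ, (∑ i, δ i) = 0 →
      lam * (∑ i, δ i ^ 2) ≤ δ ⬝ᵥ ((D l * (D l)ᵀ).mulVec δ))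
    (mlow mhigh : ℕ)
    (hmlow : IsLeast (Set.range m) mlow) (hmhigh : IsGreatest (Set.range m) mhigh)
    (Ω Ωhat : ℝ → ℝ) (β : ℕ → ℝ) (d : ℝ)
    (hΩ : IsPredefinedTimeConsensusFunction Ω Ωhat β d)
    (Tc : ℝ) (hTc : 0 < Tc)
    (κ : (l : ι) → Fin (m l) → ℝ)
    (hκ : ∀ l e, β mlow ^ d / (lam * β mhigh ^ 2 * Tc) ≤ κ l e)
    (F : (l : ι) → (Fin (m l) → ℝ) → (Fin (m l) → ℝ))
    (hF : ∀ l v e, F l v e = if v e = 0 then 0 else κ l e * Ω |v e| / v e)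
    (σ : ℝ → ι) (t₀ : ℝ) (x : ℝ → Fin n → ℝ)
    (hx : ∀ t, t₀ ≤ t →
      HasDerivAt x (-(D (σ t)).mulVec (F (σ t) ((D (σ t))ᵀ.mulVec (x t)))) t) :
    ∀ t, t₀ + Tc ≤ t →
      ∀ i, x t i = (1 / (n : ℝ)) * ∑ j, x t₀ j :=
  stmt13_general m D hD lam hlam hRay mlow mhigh hmlow hmhigh Ω Ωhat β d hΩ Tc hTc κ hκ F hF σ t₀ x
    hx
end SettlingTime
end

section
/- Let Q be a real symmetric positive semidefinite n×n matrix with Q·𝟏 = 0, and let λ₂ > 0 satisfy yᵀQy ≥ λ₂·‖y‖₂² for every y ∈ ℝⁿ with Σ_i y_i = 0. Let Ω be a predefined-time consensus function with data (Ω̂, β, d), let T_c > 0, and let κ_i ≥ 1/(λ₂·β(n)^{2−d}·T_c) for i = 1,…,n. Let x : [t₀,∞) → ℝⁿ be differentiable with ẋ_i(t) = −κ_i·Ω(|e_i(t)|)/e_i(t) if e_i(t) ≠ 0 and ẋ_i(t) = 0 if e_i(t) = 0, where e(t) = Q·x(t). Then for all t ≥ t₀ + T_c, x_1(t) = x_2(t)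 = ⋯ = x_n(t); i.e. consensus is reached within the predefined time T_c. -/
/-!
`V = xᵀQx` is a Lyapunov function for protocol (ii): `V̇ = -2 ∑_{eᵢ ≠ 0} κᵢ Ω(|eᵢ|)`, and `V = 0`
exactly at consensus, because `Q` has spectral gap `λ₂` on the complement of `𝟏`. Cauchy–Schwarz
against the centred state turns that gap into `λ₂ V ≤ ‖e‖²`.

If `Ω(0) = 0`, the defining inequality of `Ω` gives `z ż ≤ -Ω̂(z)/T_c` for `z = β(n) √(λ₂ V)`, so
the clock `∫₀^z s/Ω̂(s) ds`, which starts below `∫₀^∞ s/Ω̂(s) ds = 1`, runs down at rate at least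
`1/T_c` as long as `z > 0`: hence `z` vanishes before `t₀ + T_c`.

If `Ω(0) > 0`, then `V̇ ≤ -2κΩ(0)` wherever `V > 0`, while `V̇ = 0` at every later zero of `V` (a
minimum). By Darboux, `V̇` cannot jump between these values, so `V` vanishes from the start.
-/

open Matrix MeasureTheory

open Set

theorem Convex.image_sub_le_mul_sub_of_hasDerivAt_le {D : Set ℝ} (hD : Convex ℝ D)
    {f f' : ℝ → ℝ} (hf : ∀ x ∈ D, HasDerivAt f (f' x) x) {C : ℝ} (hC : ∀ x ∈ D, f' x ≤ C)
    {x y : ℝ} (hx : x ∈ D) (hy : y ∈ D) (hxy : x ≤ y) : f y - f x ≤ C * (y - x) :=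
  hD.image_sub_le_mul_sub_of_deriv_le (fun s hs => (hf s hs).continuousAt.continuousWithinAt)
    (fun s hs => (hf s (interior_subset hs)).differentiableAt.differentiableWithinAt)
    (fun s hs => (hf s (interior_subset hs)).deriv ▸ hC s (interior_subset hs)) x hx y hy hxy

section DotProduct

variable {ι : Type*} [Fintype ι] {f g : ℝ → ι → ℝ} {f' g' : ι → ℝ} {t : ℝ}

theorem HasDerivAt.dotProduct (hf : HasDerivAt f f' t) (hg : HasDerivAt g g' t) :
    HasDerivAt (fun s => f s ⬝ᵥ g s) (f' ⬝ᵥ g t + f t ⬝ᵥ g') t := by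
  simp only [_root_.dotProduct]
  rw [← Finset.sum_add_distrib]
  exact HasDerivAt.fun_sum fun i _ => (hasDerivAt_pi.1 hf i).mul (hasDerivAt_pi.1 hg i)

theorem HasDerivAt.mulVec (A : Matrix ι ι ℝ) (hf : HasDerivAt f f' t) :
    HasDerivAt (fun s => A *ᵥ f s) (A *ᵥ f') t :=
  hasDerivAt_pi.2 fun i => by
    simp only [Matrix.mulVec, _root_.dotProduct]
    exact HasDerivAt.fun_sum fun j _ => (hasDerivAt_pi.1 hf j).const_mul (A i j)

theorem HasDerivAt.dotProduct_mulVec_self {A : Matrix ι ι ℝ} (hA : A.IsSymm)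
    (hf : HasDerivAt f f' t) :
    HasDerivAt (fun s => f s ⬝ᵥ A *ᵥ f s) (2 * (f' ⬝ᵥ A *ᵥ f t)) t := by
  convert hf.dotProduct (hf.mulVec A) using 1
  rw [dotProduct_mulVec (f t), ← mulVec_transpose, hA.eq, dotProduct_comm, two_mul]

end DotProduct

section Laplacian

variable {ι : Type*} [Fintype ι] {Q : Matrix ι ι ℝ} {lam2 : ℝ}

def HasSpectralGap (Q : Matrix ι ι ℝ) (lam2 : ℝ) : Prop :=
  ∀ y : ι → ℝ, ∑ i, y i = 0 → lam2 * ∑ i, y i ^ 2 ≤ y ⬝ᵥ Q *ᵥ y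

theorem sum_sub_mean_eq_zero (u : ι → ℝ) :
    ∑ i, (u i - (∑ j, u j) / Fintype.card ι) = 0 := by
  rcases isEmpty_or_nonempty ι with hι | hι
  · simp
  · rw [Finset.sum_sub_distrib, Finset.sum_const, Finset.card_univ, nsmul_eq_mul,
      mul_div_cancel₀ _ (by positivity), sub_self]

theorem one_dotProduct_mulVec_eq_zero (hQ : Q.IsSymm) (hQ1 : Q *ᵥ (fun _ => (1:ℝ)) = 0)
    (u : ι → ℝ) : (fun _ => (1:ℝ)) ⬝ᵥ Q *ᵥ u = 0 := by
  rw [dotProduct_mulVec, ← mulVec_transpose, hQ.eq, hQ1, zero_dotProduct]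

theorem mulVec_sub_const (hQ1 : Q *ᵥ (fun _ => (1:ℝ)) = 0) (u : ι → ℝ) (c : ℝ) :
    Q *ᵥ (fun i => u i - c) = Q *ᵥ u := by
  rw [show (fun i => u i - c) = u - c • (fun _ => (1:ℝ)) by ext; simp, mulVec_sub, mulVec_smul,
    hQ1, smul_zero, sub_zero]

theorem sub_const_dotProduct_mulVec_s15 (hQ : Q.IsSymm) (hQ1 : Q *ᵥ (fun _ => (1:ℝ)) = 0)
    (u : ι → ℝ) (c : ℝ) : (fun i => u i - c) ⬝ᵥ Q *ᵥ u = u ⬝ᵥ Q *ᵥ u := by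
  rw [show (fun i => u i - c) = u - c • (fun _ => (1:ℝ)) by ext; simp, sub_dotProduct,
    smul_dotProduct, one_dotProduct_mulVec_eq_zero hQ hQ1, smul_zero, sub_zero]

theorem mul_sum_sq_sub_mean_le (hQ : Q.IsSymm) (hQ1 : Q *ᵥ (fun _ => (1:ℝ)) = 0)
    (hRay : HasSpectralGap Q lam2) (u : ι → ℝ) :
    lam2 * ∑ i, (u i - (∑ j, u j) / Fintype.card ι) ^ 2 ≤ u ⬝ᵥ Q *ᵥ u := by
  have h := hRay _ (sum_sub_mean_eq_zero u)
  rwa [mulVec_sub_const hQ1, sub_const_dotProduct_mulVec_s15 hQ hQ1] at h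

theorem dotProduct_mulVec_self_nonneg (hQ : Q.IsSymm) (hQ1 : Q *ᵥ (fun _ => (1:ℝ)) = 0)
    (hlam2 : 0 ≤ lam2)
    (hRay : HasSpectralGap Q lam2) (u : ι → ℝ) :
    0 ≤ u ⬝ᵥ Q *ᵥ u :=
  (by positivity : 0 ≤ lam2 * _).trans (mul_sum_sq_sub_mean_le hQ hQ1 hRay u)

theorem mul_dotProduct_mulVec_self_le (hQ : Q.IsSymm) (hQ1 : Q *ᵥ (fun _ => (1:ℝ)) = 0)
    (hlam2 : 0 ≤ lam2)
    (hRay : HasSpectralGap Q lam2) (u : ι → ℝ) :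
    lam2 * (u ⬝ᵥ Q *ᵥ u) ≤ ∑ i, (Q *ᵥ u) i ^ 2 := by
  set y : ι → ℝ := fun i => u i - (∑ j, u j) / Fintype.card ι
  set V := u ⬝ᵥ Q *ᵥ u
  have hyQ : y ⬝ᵥ Q *ᵥ u = V := sub_const_dotProduct_mulVec_s15 hQ hQ1 u _
  have hCS : V ^ 2 ≤ (∑ i, y i ^ 2) * ∑ i, (Q *ᵥ u) i ^ 2 :=
    hyQ ▸ Finset.sum_mul_sq_le_sq_mul_sq Finset.univ y (Q *ᵥ u)
  have hRy : lam2 * ∑ i, y i ^ 2 ≤ V := mul_sum_sq_sub_mean_le hQ hQ1 hRay u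
  have hV : 0 ≤ V := dotProduct_mulVec_self_nonneg hQ hQ1 hlam2 hRay u
  have hQu : 0 ≤ ∑ i, (Q *ᵥ u) i ^ 2 := by positivity
  rcases hV.eq_or_lt with h0 | h0
  · rw [← h0, mul_zero]; exact hQu
  · nlinarith

theorem eq_of_dotProduct_mulVec_self_eq_zero (hQ : Q.IsSymm)
    (hQ1 : Q *ᵥ (fun _ => (1:ℝ)) = 0) (hlam2 : 0 < lam2)
    (hRay : HasSpectralGap Q lam2) {u : ι → ℝ}
    (hu : u ⬝ᵥ Q *ᵥ u = 0) (i j : ι) : u i = u j := by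
  have hle := mul_sum_sq_sub_mean_le hQ hQ1 hRay u
  rw [hu] at hle
  have hzero := (Finset.sum_eq_zero_iff_of_nonneg fun k _ => sq_nonneg _).1
    (le_antisymm (nonpos_of_mul_nonpos_right hle hlam2) (by positivity))
  have hmean : ∀ k, u k = (∑ l, u l) / Fintype.card ι := fun k =>
    sub_eq_zero.1 ((pow_eq_zero_iff two_ne_zero).1 (hzero k (Finset.mem_univ k)))
  rw [hmean i, hmean j]

end Laplacian

section PredefinedTime

variable {g : ℝ → ℝ}

theorem intervalIntegral_div_pos (hg_pos : ∀ u, 0 < u → 0 < g u)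
    (hg_int : IntegrableOn (fun u => u / g u) (Ioi 0)) {u : ℝ} (hu : 0 < u) :
    0 < ∫ v in (0)..u, v / g v :=
  intervalIntegral.intervalIntegral_pos_of_pos_on
    ((intervalIntegrable_iff_integrableOn_Ioc_of_le hu.le).2 (hg_int.mono_set Ioc_subset_Ioi_self))
    (fun v hv => div_pos hv.1 (hg_pos v hv.1)) hu

theorem intervalIntegral_div_le (hg_pos : ∀ u, 0 < u → 0 < g u)
    (hg_int : IntegrableOn (fun u => u / g u) (Ioi 0)) {u : ℝ} (hu : 0 ≤ u) :
    ∫ v in (0)..u, v / g v ≤ ∫ v in Ioi 0, v / g v := by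
  rw [intervalIntegral.integral_of_le hu]
  refine setIntegral_mono_set hg_int ?_ Ioc_subset_Ioi_self.eventuallyLE
  filter_upwards [self_mem_ae_restrict measurableSet_Ioi] with v hv
  exact (div_pos hv (hg_pos v hv)).le

theorem hasDerivAt_intervalIntegral_div (hg_pos : ∀ u, 0 < u → 0 < g u)
    (hg_cont : ContinuousOn (fun u => g u / u) (Ioi 0))
    (hg_int : IntegrableOn (fun u => u / g u) (Ioi 0)) {u : ℝ} (hu : 0 < u) :
    HasDerivAt (fun w => ∫ v in (0)..w, v / g v) (u / g u) u := by
  have hcont : ContinuousAt (fun v => v / g v) u := by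
    convert (hg_cont.continuousAt (Ioi_mem_nhds hu)).inv₀ (div_pos (hg_pos u hu) hu).ne' using 1
    ext v
    exact (inv_div _ _).symm
  exact intervalIntegral.integral_hasDerivAt_right
    ((intervalIntegrable_iff_integrableOn_Ioc_of_le hu.le).2 (hg_int.mono_set Ioc_subset_Ioi_self))
    ⟨Ioi 0, Ioi_mem_nhds hu, hg_int.aestronglyMeasurable⟩ hcont

theorem sub_lt_of_mul_hasDerivAt_le_neg_div (hg_pos : ∀ u, 0 < u → 0 < g u)
    (hg_cont : ContinuousOn (fun u => g u / u) (Ioi 0)) (hg_int : ∫ u in Ioi 0, u / g u = 1)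
    {z z' : ℝ → ℝ} {T a b : ℝ} (hT : 0 < T) (hz_pos : ∀ s ∈ Icc a b, 0 < z s)
    (hz : ∀ s ∈ Icc a b, HasDerivAt z (z' s) s)
    (hz' : ∀ s ∈ Icc a b, z s * z' s ≤ -(g (z s) / T)) :
    b - a < T := by
  rcases lt_or_ge b a with hba | hab
  · linarith
  have hint : IntegrableOn (fun u => u / g u) (Ioi 0) :=
    Integrable.of_integral_ne_zero (hg_int ▸ one_ne_zero)
  set F : ℝ → ℝ := fun w => ∫ v in (0)..w, v / g v
  have hclock : ∀ s ∈ Icc a b,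
      HasDerivAt (fun r => F (z r) + r / T) (z s / g (z s) * z' s + 1 / T) s := fun s hs =>
    ((hasDerivAt_intervalIntegral_div hg_pos hg_cont hint (hz_pos s hs)).comp s (hz s hs)).add
      ((hasDerivAt_id s).div_const T)
  have hrate : ∀ s ∈ Icc a b, z s / g (z s) * z' s + 1 / T ≤ 0 := by
    intro s hs
    have hgs := hg_pos _ (hz_pos s hs)
    have := div_le_div_of_nonneg_right (hz' s hs) hgs.le
    rw [neg_div, div_right_comm, div_self hgs.ne'] at this
    rw [div_mul_eq_mul_div]
    linarith
  have hdecr := (convex_Icc a b).image_sub_le_mul_sub_of_hasDerivAt_le hclock hrate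
    (left_mem_Icc.2 hab) (right_mem_Icc.2 hab) hab
  have hFa : F (z a) ≤ 1 :=
    hg_int ▸ intervalIntegral_div_le hg_pos hint (hz_pos a (left_mem_Icc.2 hab)).le
  have hFb : 0 < F (z b) := intervalIntegral_div_pos hg_pos hint (hz_pos b (right_mem_Icc.2 hab))
  have : (b - a) / T < 1 := by rw [sub_div]; linarith
  rwa [div_lt_one hT] at this

theorem eq_zero_of_forall_apply_sqrt_le_neg_mul_deriv (hg_pos : ∀ u, 0 < u → 0 < g u)
    (hg_cont : ContinuousOn (fun u => g u / u) (Ioi 0)) (hg_int : ∫ u in Ioi 0, u / g u = 1)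
    {V V' : ℝ → ℝ} {k T t₀ : ℝ} (hk : 0 < k) (hT : 0 < T)
    (hV_nonneg : ∀ t, t₀ ≤ t → 0 ≤ V t) (hV : ∀ t, t₀ ≤ t → HasDerivAt V (V' t) t)
    (hV'_nonpos : ∀ t, t₀ ≤ t → V' t ≤ 0)
    (hV' : ∀ t, t₀ ≤ t → 0 < V t → g √(k * V t) ≤ -(k * T / 2 * V' t))
    {t : ℝ} (ht : t₀ + T ≤ t) : V t = 0 := by
  by_contra hVt
  have hpos : ∀ s ∈ Icc t₀ t, 0 < V s := fun s hs => by
    have := (convex_Ici t₀).image_sub_le_mul_sub_of_hasDerivAt_le hV hV'_nonpos hs.1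
      (show t₀ ≤ t by linarith) hs.2
    linarith [(hV_nonneg t (by linarith)).lt_of_ne' hVt]
  have hroot_pos : ∀ s ∈ Icc t₀ t, 0 < √(k * V s) := fun s hs =>
    Real.sqrt_pos.2 (mul_pos hk (hpos s hs))
  have := sub_lt_of_mul_hasDerivAt_le_neg_div hg_pos hg_cont hg_int hT hroot_pos
    (fun s hs => ((hV s hs.1).const_mul k).sqrt (mul_pos hk (hpos s hs)).ne')
    (fun s hs => by
      have : √(k * V s) * (k * V' s / (2 * √(k * V s))) = k * V' s / 2 := by
        have := (hroot_pos s hs).ne'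
        field_simp
      rw [this, le_neg, ← neg_div, div_le_iff₀ hT]
      linarith [hV' s hs.1 (hpos s hs)])
  linarith

end PredefinedTime

theorem eq_zero_of_nonneg_of_deriv_le_neg_of_pos {V V' : ℝ → ℝ} {t₀ c : ℝ} (hc : 0 < c)
    (hV_nonneg : ∀ t, t₀ ≤ t → 0 ≤ V t) (hV : ∀ t, t₀ ≤ t → HasDerivAt V (V' t) t)
    (hV' : ∀ t, t₀ ≤ t → 0 < V t → V' t ≤ -c) : V t₀ = 0 := by
  by_contra hV₀
  have hpos₀ : 0 < V t₀ := (hV_nonneg t₀ le_rfl).lt_of_ne' hV₀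
  have hcrit : ∀ r, t₀ < r → V r = 0 → V' r = 0 := fun r hr hVr =>
    IsLocalMin.hasDerivAt_eq_zero
      (Filter.mem_of_superset (Ioi_mem_nhds hr) fun s hs => hVr ▸ hV_nonneg s (le_of_lt hs))
      (hV r hr.le)
  obtain ⟨b, hb, hVb⟩ : ∃ b, t₀ < b ∧ V b = 0 := by
    by_contra! hne
    have hpos : ∀ t ∈ Ici t₀, 0 < V t := by
      rintro t (ht : t₀ ≤ t)
      rcases ht.eq_or_lt with rfl | ht
      · exact hpos₀
      · exact (hV_nonneg t ht.le).lt_of_ne' (hne t ht)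
    have hT : t₀ ≤ t₀ + V t₀ / c + 1 := by have := div_nonneg hpos₀.le hc.le; linarith
    have hdecr := (convex_Ici t₀).image_sub_le_mul_sub_of_hasDerivAt_le hV
      (fun t ht => hV' t ht (hpos t ht)) self_mem_Ici hT hT
    have : -c * (t₀ + V t₀ / c + 1 - t₀) = -(V t₀) - c := by field_simp; ring
    linarith [hpos _ hT]
  -- Darboux: `V'` would take the value `-c/2`, avoided both where `V > 0` and where `V = 0`.
  obtain ⟨r, ⟨hr₀, hrb⟩, hr⟩ := exists_hasDerivWithinAt_eq_of_gt_of_lt hb.le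
    (fun t ht => (hV t ht.1).hasDerivWithinAt) (m := -c / 2)
    (by linarith [hV' t₀ le_rfl hpos₀]) (by rw [hcrit b hb hVb]; linarith)
  rcases (hV_nonneg r hr₀.le).eq_or_lt with h0 | hpos
  · linarith [hcrit r hr₀ h0.symm]
  · linarith [hV' r hr₀.le hpos]

section Protocol

variable {ι : Type*} [Fintype ι] (κ : ι → ℝ) (Ω : ℝ → ℝ)

noncomputable def consensusField (e : ι → ℝ) : ι → ℝ :=
  fun i => if e i = 0 then 0 else -(κ i * Ω |e i| / e i)

noncomputable def dissipation (e : ι → ℝ) : ℝ :=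
  ∑ i with e i ≠ 0, κ i * Ω |e i|

variable {κ Ω}

theorem consensusField_dotProduct (e : ι → ℝ) :
    consensusField κ Ω e ⬝ᵥ e = -dissipation κ Ω e := by
  rw [dissipation, Finset.sum_filter, ← Finset.sum_neg_distrib]
  refine Finset.sum_congr rfl fun i _ => ?_
  by_cases he : e i = 0 <;> simp [consensusField, he]

theorem dissipation_nonneg (hκ : ∀ i, 0 ≤ κ i) (hΩ : ∀ z, 0 ≤ z → 0 ≤ Ω z) (e : ι → ℝ) :
    0 ≤ dissipation κ Ω e :=
  Finset.sum_nonneg fun i _ => mul_nonneg (hκ i) (hΩ _ (abs_nonneg _))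

theorem mul_le_dissipation_of_ne_zero {c : ℝ} (hc : 0 ≤ c) (hκ : ∀ i, c ≤ κ i)
    (hΩ_mono : Monotone Ω) (hΩ : ∀ z, 0 ≤ z → 0 ≤ Ω z) {e : ι → ℝ} (he : e ≠ 0) :
    c * Ω 0 ≤ dissipation κ Ω e := by
  obtain ⟨i, hi⟩ := Function.ne_iff.1 he
  calc c * Ω 0 ≤ κ i * Ω |e i| :=
        mul_le_mul (hκ i) (hΩ_mono (abs_nonneg _)) (hΩ 0 le_rfl) (hc.trans (hκ i))
    _ ≤ dissipation κ Ω e :=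
        Finset.single_le_sum (fun j _ => mul_nonneg (hc.trans (hκ j)) (hΩ _ (abs_nonneg _)))
          (Finset.mem_filter.2 ⟨Finset.mem_univ i, hi⟩)

theorem mul_sum_le_dissipation {c : ℝ} (hκ : ∀ i, c ≤ κ i)
    (hΩ : ∀ z, 0 ≤ z → 0 ≤ Ω z) (hΩ0 : Ω 0 = 0) (e : ι → ℝ) :
    c * ∑ i, Ω |e i| ≤ dissipation κ Ω e := by
  rw [← Finset.sum_filter_of_ne (p := fun i => e i ≠ 0) fun i _ h he => h (by simp [he, hΩ0]),
    Finset.mul_sum]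
  exact Finset.sum_le_sum fun i _ => mul_le_mul_of_nonneg_right (hκ i) (hΩ _ (abs_nonneg _))

theorem HasDerivAt.dotProduct_mulVec_self_consensusField {Q : Matrix ι ι ℝ} (hQ : Q.IsSymm)
    {x : ℝ → ι → ℝ} {t : ℝ} (hx : HasDerivAt x (consensusField κ Ω (Q *ᵥ x t)) t) :
    HasDerivAt (fun s => x s ⬝ᵥ Q *ᵥ x s) (-2 * dissipation κ Ω (Q *ᵥ x t)) t := by
  have := hx.dotProduct_mulVec_self hQ
  rwa [consensusField_dotProduct, mul_neg, ← neg_mul] at this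

end Protocol

theorem Ωhat_sqrt_le_mul_dissipation {ι : Type*} [Fintype ι] {Q : Matrix ι ι ℝ}
    (hQsymm : Q.IsSymm) (hQ1 : Q *ᵥ (fun _ => (1:ℝ)) = 0) {lam2 : ℝ} (hlam2 : 0 < lam2)
    (hRay : HasSpectralGap Q lam2)
    {Ω Ωhat : ℝ → ℝ} {b d Tc : ℝ} (hΩ : ∀ z, 0 ≤ z → 0 ≤ Ω z) (hΩ0 : Ω 0 = 0)
    (hΩhat_mono : MonotoneOn Ωhat (Ici 0)) (hb : 0 < b)
    (hΩhat_le : ∀ x : ι → ℝ, (∀ i, 0 ≤ x i) → Ωhat (b * √(∑ i, x i ^ 2)) ≤ b ^ d * ∑ i, Ω (x i))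
    (hTc : 0 < Tc) {κ : ι → ℝ} (hκ : ∀ i, 1 / (lam2 * b ^ ((2:ℝ) - d) * Tc) ≤ κ i)
    (u : ι → ℝ) :
    Ωhat √(b ^ 2 * lam2 * (u ⬝ᵥ Q *ᵥ u)) ≤ b ^ 2 * lam2 * Tc * dissipation κ Ω (Q *ᵥ u) := by
  set e := Q *ᵥ u
  have hroot : √(b ^ 2 * lam2 * (u ⬝ᵥ Q *ᵥ u)) ≤ b * √(∑ i, |e i| ^ 2) := by
    simp only [sq_abs]
    rw [← Real.sqrt_sq hb.le, ← Real.sqrt_mul (sq_nonneg b), Real.sqrt_sq hb.le, mul_assoc]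
    exact Real.sqrt_le_sqrt (mul_le_mul_of_nonneg_left
      (mul_dotProduct_mulVec_self_le hQsymm hQ1 hlam2.le hRay u) (sq_nonneg b))
  have hbd : b ^ d * b ^ ((2:ℝ) - d) = b ^ 2 := by
    rw [← Real.rpow_add hb, add_sub_cancel, Real.rpow_two]
  calc Ωhat √(b ^ 2 * lam2 * (u ⬝ᵥ Q *ᵥ u)) ≤ Ωhat (b * √(∑ i, |e i| ^ 2)) :=
        hΩhat_mono (Real.sqrt_nonneg _) (mul_nonneg hb.le (Real.sqrt_nonneg _)) hroot
    _ ≤ b ^ d * ∑ i, Ω |e i| := hΩhat_le _ fun i => abs_nonneg _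
    _ = b ^ 2 * lam2 * Tc * (1 / (lam2 * b ^ ((2:ℝ) - d) * Tc) * ∑ i, Ω |e i|) := by
        rw [← hbd]
        field_simp
    _ ≤ b ^ 2 * lam2 * Tc * dissipation κ Ω e :=
        mul_le_mul_of_nonneg_left (mul_sum_le_dissipation hκ hΩ hΩ0 e) (by positivity)

theorem stmt15_general {n : ℕ} (hn : 1 ≤ n) (Q : Matrix (Fin n) (Fin n) ℝ)
    (hQsymm : Q.IsSymm)
    (hQ1 : Q.mulVec (fun _ => (1:ℝ)) = 0)
    (lam2 : ℝ) (hlam2 : 0 < lam2)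
    (hRay : ∀ y : Fin n → ℝ, (∑ i, y i) = 0 →
      lam2 * (∑ i, y i ^ 2) ≤ y ⬝ᵥ Q.mulVec y)
    (Ω Ωhat : ℝ → ℝ) (β : ℕ → ℝ) (d : ℝ)
    (hΩ : IsPredefinedTimeConsensusFunction Ω Ωhat β d)
    (Tc : ℝ) (hTc : 0 < Tc)
    (κ : Fin n → ℝ) (hκ : ∀ i, 1 / (lam2 * β n ^ ((2:ℝ) - d) * Tc) ≤ κ i)
    (t₀ : ℝ) (x : ℝ → Fin n → ℝ)
    (hx : ∀ t, t₀ ≤ t →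
      HasDerivAt x (fun i => if Q.mulVec (x t) i = 0 then 0
        else -(κ i * Ω |Q.mulVec (x t) i| / Q.mulVec (x t) i)) t) :
    ∀ t, t₀ + Tc ≤ t → ∀ i j, x t i = x t j := by
  obtain ⟨hΩ_mono, hΩ_nonneg, hΩhat_mono, hΩhat_pos, hΩhat_cont, -, hβ, -, hΩhat_le, hΩhat_int⟩ :=
    hΩ
  have hβn := hβ n
  set κ₀ := 1 / (lam2 * β n ^ ((2:ℝ) - d) * Tc)
  have hκ₀ : 0 < κ₀ := by positivity
  set V : ℝ → ℝ := fun t => x t ⬝ᵥ Q *ᵥ x t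
  set W : ℝ → ℝ := fun t => dissipation κ Ω (Q *ᵥ x t)
  have hV_nonneg : ∀ t, 0 ≤ V t := fun t =>
    dotProduct_mulVec_self_nonneg hQsymm hQ1 hlam2.le hRay (x t)
  have hW_nonneg : ∀ t, 0 ≤ W t := fun t =>
    dissipation_nonneg (fun i => hκ₀.le.trans (hκ i)) hΩ_nonneg _
  have hV : ∀ t, t₀ ≤ t → HasDerivAt V (-2 * W t) t := fun t ht =>
    (hx t ht).dotProduct_mulVec_self_consensusField hQsymm
  suffices hV0 : ∀ t, t₀ + Tc ≤ t → V t = 0 from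
    fun t ht => eq_of_dotProduct_mulVec_self_eq_zero hQsymm hQ1 hlam2 hRay (hV0 t ht)
  rcases (hΩ_nonneg 0 le_rfl).eq_or_lt with hΩ0 | hΩ0
  · intro t ht
    refine eq_zero_of_forall_apply_sqrt_le_neg_mul_deriv hΩhat_pos hΩhat_cont hΩhat_int
      (k := β n ^ 2 * lam2) (by positivity) hTc (fun s _ => hV_nonneg s) hV
      (fun s _ => by linarith [hW_nonneg s]) (fun s _ _ => ?_) ht
    have := Ωhat_sqrt_le_mul_dissipation hQsymm hQ1 hlam2 hRay hΩ_nonneg hΩ0.symm hΩhat_mono hβn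
      (hΩhat_le n hn) hTc hκ (x s)
    linarith
  · intro t ht
    refine eq_zero_of_nonneg_of_deriv_le_neg_of_pos (c := 2 * (κ₀ * Ω 0)) (by positivity)
      (fun s _ => hV_nonneg s) (fun s hs => hV s (by linarith)) (fun s _ hVs => ?_)
    have he : Q *ᵥ x s ≠ 0 := fun he => hVs.ne' (by simp [V, he])
    linarith [mul_le_dissipation_of_ne_zero hκ₀.le hκ hΩ_mono hΩ_nonneg he]

/-- predefined-time part of Theorem 3: with gains
κᵢ ≥ 1/(λ₂β(n)^{2−d}T_c), protocol (ii) on a static network with Laplacian Q and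
algebraic connectivity at least λ₂ reaches consensus within the predefined time T_c. -/
theorem stmt15 {n : ℕ} (hn : 1 ≤ n) (Q : Matrix (Fin n) (Fin n) ℝ)
    (hQsymm : Q.IsSymm) (hQpsd : Q.PosSemidef)
    (hQ1 : Q.mulVec (fun _ => (1:ℝ)) = 0)
    (lam2 : ℝ) (hlam2 : 0 < lam2)
    (hRay : ∀ y : Fin n → ℝ, (∑ i, y i) = 0 →
      lam2 * (∑ i, y i ^ 2) ≤ y ⬝ᵥ Q.mulVec y)
    (Ω Ωhat : ℝ → ℝ) (β : ℕ → ℝ) (d : ℝ)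
    (hΩ : IsPredefinedTimeConsensusFunction Ω Ωhat β d)
    (Tc : ℝ) (hTc : 0 < Tc)
    (κ : Fin n → ℝ) (hκ : ∀ i, 1 / (lam2 * β n ^ ((2:ℝ) - d) * Tc) ≤ κ i)
    (t₀ : ℝ) (x : ℝ → Fin n → ℝ)
    (hx : ∀ t, t₀ ≤ t →
      HasDerivAt x (fun i => if Q.mulVec (x t) i = 0 then 0
        else -(κ i * Ω |Q.mulVec (x t) i| / Q.mulVec (x t) i)) t) :
    ∀ t, t₀ + Tc ≤ t → ∀ i j, x t i = x t j :=
  stmt15_general hn Q hQsymm hQ1 lam2 hlam2 hRay Ω Ωhat β d hΩ Tc hTc κ hκ t₀ x hx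
end

section
/- Let {A^{(l)}}_{l∈ι} be a finite family of symmetric n×n matrices with nonnegative entries (edge weights a^{(l)}_{ij} ≥ 0), let Ω : ℝ → ℝ satisfy Ω(z) ≥ 0 for z ≥ 0, let κ_i > 0 for i = 1,…,n, and define Ψ̃(z) = Ω(|z|)/z for z ≠ 0 and Ψ̃(0) = 0. Let σ : [t₀,∞) → ι and let x : [t₀,∞) → ℝⁿ be differentiable with ẋ_i(t) = κ_i·Ψ̃(e_i(t)) for all i and all t ≥ t₀, where e_i(t) = Σ_{j=1}^n a^{(σ(t))}_{ij}·(x_j(t) − x_i(t)). Then t ↦ max_{1≤i≤n} x_i(t) is nonincreasing on [t₀,∞), t ↦ min_{1≤i≤n} x_i(t) is nondecreasing on [t₀,∞), and consequently V(t) = max_i x_i(t) − min_i x_i(t) is nonincreasing on [t₀,∞). -/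
/-!
At a node attaining the maximum the disagreement `eᵢ = ∑ⱼ aᵢⱼ (xⱼ - xᵢ)` is `≤ 0`, and `Ψ̃` has the
sign of its argument, so `ẋᵢ ≤ 0`; symmetrically `ẋᵢ ≥ 0` at a minimizer. This is a pointwise
condition, so the switching signal plays no role. A maximum of finitely many differentiable
functions whose active derivatives are `≤ 0` has nonpositive lower right Dini derivative, hence
is nonincreasing.
-/

open Filter Topology

namespace Finset

variable {ι : Type*} {s : Finset ι}

lemma neg_sup'_neg (hs : s.Nonempty) (f : ι → ℝ) :
    -s.sup' hs (fun i => -f i) = s.inf' hs f :=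
  le_antisymm (le_inf' _ _ fun _ hi => neg_le.1 (le_sup' (fun i => -f i) hi))
    (le_neg.2 (sup'_le _ _ fun _ hi => neg_le_neg (inf'_le f hi)))

lemma eventually_slope_sup'_lt {x : ℝ → ι → ℝ} {x' : ι → ℝ} {u r : ℝ} (hs : s.Nonempty)
    (hx : ∀ i ∈ s, HasDerivAt (fun t => x t i) (x' i) u)
    (hmax : ∀ i ∈ s, x u i = s.sup' hs (x u) → x' i ≤ 0) (hr : 0 < r) :
    ∀ᶠ z in 𝓝[>] u, slope (fun t => s.sup' hs (x t)) u z < r := by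
  set M := s.sup' hs (x u)
  have hbound : ∀ i ∈ s, ∀ᶠ z in 𝓝[>] u, x z i < M + r * (z - u) := by
    intro i hi
    by_cases hiM : x u i = M
    · filter_upwards [(hx i hi).hasDerivWithinAt.limsup_slope_le' (lt_irrefl u)
        ((hmax i hi hiM).trans_lt hr), self_mem_nhdsWithin] with z hz (hzu : u < z)
      rw [slope_def_field, div_lt_iff₀ (sub_pos.2 hzu), hiM] at hz
      linarith
    · have hlt : x u i < M := (le_sup' (x u) hi).lt_of_ne hiM
      filter_upwards [((hx i hi).continuousAt.eventually_lt continuousAt_const hlt).filter_mono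
        nhdsWithin_le_nhds, self_mem_nhdsWithin] with z hz (hzu : u < z)
      nlinarith [mul_pos hr (sub_pos.2 hzu)]
  filter_upwards [(eventually_all_finset s).2 hbound, self_mem_nhdsWithin] with z hz (hzu : u < z)
  rw [slope_def_field, div_lt_iff₀ (sub_pos.2 hzu), sub_lt_iff_lt_add']
  exact (sup'_lt_iff hs).2 hz

theorem antitoneOn_sup'_of_hasDerivAt {x x' : ℝ → ι → ℝ} {t₀ : ℝ} (hs : s.Nonempty)
    (hx : ∀ i ∈ s, ∀ t ∈ Set.Ici t₀, HasDerivAt (fun τ => x τ i) (x' t i) t)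
    (hmax : ∀ t ∈ Set.Ici t₀, ∀ i ∈ s, x t i = s.sup' hs (x t) → x' t i ≤ 0) :
    AntitoneOn (fun t => s.sup' hs (x t)) (Set.Ici t₀) := by
  intro a ha b _ hab
  have hcont : ContinuousOn (fun t => s.sup' hs (x t)) (Set.Icc a b) := fun t ht =>
    (ContinuousAt.finset_sup'_apply hs fun i hi =>
      (hx i hi t (ha.trans ht.1)).continuousAt).continuousWithinAt
  refine image_le_of_liminf_slope_right_le_deriv_boundary hcont le_rfl continuousOn_const
    (fun t _ => (hasDerivAt_const t _).hasDerivWithinAt) (B' := fun _ => 0)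
    (fun t ht r hr => ?_) (Set.right_mem_Icc.2 hab)
  have ht₀ : t ∈ Set.Ici t₀ := ha.trans ht.1
  exact (eventually_slope_sup'_lt hs (fun i hi => hx i hi t ht₀) (hmax t ht₀) hr).frequently

theorem monotoneOn_inf'_of_hasDerivAt {x x' : ℝ → ι → ℝ} {t₀ : ℝ} (hs : s.Nonempty)
    (hx : ∀ i ∈ s, ∀ t ∈ Set.Ici t₀, HasDerivAt (fun τ => x τ i) (x' t i) t)
    (hmin : ∀ t ∈ Set.Ici t₀, ∀ i ∈ s, x t i = s.inf' hs (x t) → 0 ≤ x' t i) :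
    MonotoneOn (fun t => s.inf' hs (x t)) (Set.Ici t₀) := by
  have hneg := antitoneOn_sup'_of_hasDerivAt (x := fun t i => -x t i) (x' := fun t i => -x' t i)
    hs (fun i hi t ht => (hx i hi t ht).neg) fun t ht i hi hi_max =>
      neg_nonpos.2 (hmin t ht i hi (by rw [← neg_sup'_neg, ← hi_max, neg_neg]))
  intro a ha b hb hab
  simpa only [← neg_sup'_neg, neg_le_neg_iff] using hneg ha hb hab

end Finset

section Disagreement

variable {ι : Type*} [Fintype ι] {a w : ι → ℝ} {i : ι}

lemma sum_mul_sub_nonpos_of_forall_le (ha : ∀ j, 0 ≤ a j) (hi : ∀ j, w j ≤ w i) :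
    ∑ j, a j * (w j - w i) ≤ 0 :=
  Finset.sum_nonpos fun j _ => mul_nonpos_of_nonneg_of_nonpos (ha j) (sub_nonpos.2 (hi j))

lemma sum_mul_sub_nonneg_of_forall_ge (ha : ∀ j, 0 ≤ a j) (hi : ∀ j, w i ≤ w j) :
    0 ≤ ∑ j, a j * (w j - w i) :=
  Finset.sum_nonneg fun j _ => mul_nonneg (ha j) (sub_nonneg.2 (hi j))

end Disagreement

section SignPreserving

variable {Ω Ψ : ℝ → ℝ} {z : ℝ}

lemma nonpos_of_eq_div_abs (hΩ : ∀ z : ℝ, 0 ≤ z → 0 ≤ Ω z) (hΨ0 : Ψ 0 = 0)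
    (hΨ : ∀ z : ℝ, z ≠ 0 → Ψ z = Ω |z| / z) (hz : z ≤ 0) : Ψ z ≤ 0 := by
  rcases hz.lt_or_eq with hz | rfl
  · rw [hΨ z hz.ne]
    exact div_nonpos_of_nonneg_of_nonpos (hΩ _ (abs_nonneg z)) hz.le
  · exact hΨ0.le

lemma nonneg_of_eq_div_abs (hΩ : ∀ z : ℝ, 0 ≤ z → 0 ≤ Ω z) (hΨ0 : Ψ 0 = 0)
    (hΨ : ∀ z : ℝ, z ≠ 0 → Ψ z = Ω |z| / z) (hz : 0 ≤ z) : 0 ≤ Ψ z := by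
  rcases hz.lt_or_eq with hz | rfl
  · rw [hΨ z hz.ne']
    exact div_nonneg (hΩ _ (abs_nonneg z)) hz.le
  · exact hΨ0.ge

end SignPreserving

theorem stmt17_general {ι : Type} {n : ℕ}
    (hne : (Finset.univ : Finset (Fin n)).Nonempty)
    (A : ι → Matrix (Fin n) (Fin n) ℝ)
    (hAnonneg : ∀ l i j, 0 ≤ A l i j)
    (Ω : ℝ → ℝ) (hΩ : ∀ z : ℝ, 0 ≤ z → 0 ≤ Ω z)
    (κ : Fin n → ℝ) (hκ : ∀ i, 0 < κ i)
    (Ψ : ℝ → ℝ) (hΨ0 : Ψ 0 = 0) (hΨ : ∀ z : ℝ, z ≠ 0 → Ψ z = Ω |z| / z)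
    (σ : ℝ → ι) (t₀ : ℝ) (x : ℝ → Fin n → ℝ)
    (hx : ∀ i, ∀ t, t₀ ≤ t →
      HasDerivAt (fun s => x s i)
        (κ i * Ψ (∑ j, A (σ t) i j * (x t j - x t i))) t) :
    (∀ s t, t₀ ≤ s → s ≤ t →
      Finset.univ.sup' hne (x t) ≤ Finset.univ.sup' hne (x s)) ∧
    (∀ s t, t₀ ≤ s → s ≤ t →
      Finset.univ.inf' hne (x s) ≤ Finset.univ.inf' hne (x t)) ∧
    (∀ s t, t₀ ≤ s → s ≤ t →
      Finset.univ.sup' hne (x t) - Finset.univ.inf' hne (x t) ≤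
        Finset.univ.sup' hne (x s) - Finset.univ.inf' hne (x s)) := by
  have hmax := Finset.antitoneOn_sup'_of_hasDerivAt (x := x) hne (fun i _ => hx i)
    fun t _ i _ hi => mul_nonpos_of_nonneg_of_nonpos (hκ i).le <|
      nonpos_of_eq_div_abs hΩ hΨ0 hΨ <| sum_mul_sub_nonpos_of_forall_le (hAnonneg (σ t) i)
        fun j => hi ▸ Finset.le_sup' _ (Finset.mem_univ j)
  have hmin := Finset.monotoneOn_inf'_of_hasDerivAt (x := x) hne (fun i _ => hx i)
    fun t _ i _ hi => mul_nonneg (hκ i).le <|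
      nonneg_of_eq_div_abs hΩ hΨ0 hΨ <| sum_mul_sub_nonneg_of_forall_ge (hAnonneg (σ t) i)
        fun j => hi ▸ Finset.inf'_le _ (Finset.mem_univ j)
  exact ⟨fun s t hs hst => hmax hs (hs.trans hst) hst,
    fun s t hs hst => hmin hs (hs.trans hst) hst,
    fun s t hs hst => sub_le_sub (hmax hs (hs.trans hst) hst) (hmin hs (hs.trans hst) hst)⟩

/-- For the switched dynamics ẋᵢ = κᵢΨ̃(eᵢ) with
eᵢ = Σⱼ a^{(σ(t))}_{ij}(xⱼ − xᵢ), Ψ̃(z) = Ω(|z|)/z for z ≠ 0 and Ψ̃(0) = 0, where the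
weight matrices are symmetric with nonnegative entries, Ω ≥ 0 on [0,∞) and κᵢ > 0,
the maximum of the states is nonincreasing, the minimum is nondecreasing, and
V(t) = maxᵢ xᵢ(t) − minᵢ xᵢ(t) is nonincreasing on [t₀,∞). -/
theorem stmt17 {ι : Type} [Fintype ι] {n : ℕ}
    (hne : (Finset.univ : Finset (Fin n)).Nonempty)
    (A : ι → Matrix (Fin n) (Fin n) ℝ)
    (hAsymm : ∀ l, (A l).IsSymm) (hAnonneg : ∀ l i j, 0 ≤ A l i j)
    (Ω : ℝ → ℝ) (hΩ : ∀ z : ℝ, 0 ≤ z → 0 ≤ Ω z)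
    (κ : Fin n → ℝ) (hκ : ∀ i, 0 < κ i)
    (Ψ : ℝ → ℝ) (hΨ0 : Ψ 0 = 0) (hΨ : ∀ z : ℝ, z ≠ 0 → Ψ z = Ω |z| / z)
    (σ : ℝ → ι) (t₀ : ℝ) (x : ℝ → Fin n → ℝ)
    (hx : ∀ i, ∀ t, t₀ ≤ t →
      HasDerivAt (fun s => x s i)
        (κ i * Ψ (∑ j, A (σ t) i j * (x t j - x t i))) t) :
    (∀ s t, t₀ ≤ s → s ≤ t →
      Finset.univ.sup' hne (x t) ≤ Finset.univ.sup' hne (x s)) ∧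
    (∀ s t, t₀ ≤ s → s ≤ t →
      Finset.univ.inf' hne (x s) ≤ Finset.univ.inf' hne (x t)) ∧
    (∀ s t, t₀ ≤ s → s ≤ t →
      Finset.univ.sup' hne (x t) - Finset.univ.inf' hne (x t) ≤
        Finset.univ.sup' hne (x s) - Finset.univ.inf' hne (x s)) :=
  stmt17_general hne A hAnonneg Ω hΩ κ hκ Ψ hΨ0 hΨ σ t₀ x hx
end
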